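/- arXiv:2308.09754 — 7 statements merged into one kernel-verified Lean document; each statement's English description precedes it below -/
import Mathlib

section
/- For n > 0 there exists C > 0 such that for all t ≥ 1, | (4πt)^(-n/2) ∫_{ℝⁿ} e^(-|y|²/(4t)) ⟨y⟩^(-n) dy − (4π)^(-n/2) (1/2) |S^{n-1}| t^(-n/2) ln(1+t) | ≤ C t^(-n/2), where |S^{n-1}| is the surface measure of the unit sphere in ℝⁿ. -/
/-!
In polar coordinates the integral is `|S^{n-1}| ∫₀^∞ e^{-r²/4t} r^{n-1} ⟨r⟩^{-n} dr`, so it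
suffices to show that this radial integral is `½ log (1 + t) + O(1)` uniformly in `t > 0`.
Split it at `r = √t`. On `[0, √t]` the integrand differs from `r / (1 + r²)`, whose integral is
exactly `½ log (1 + t)`, by at most `r / 4t + n / (1 + r²)`: the Gaussian factor costs
`1 - e^{-u} ≤ u` against `r^{n-1} ⟨r⟩^{-n} ≤ 1 / r`, and `r^{n-1} ⟨r⟩^{-n} - r ⟨r⟩^{-2}` is
controlled by Bernoulli's inequality in `r / ⟨r⟩ ∈ [0, 1]`, since `1 - r / ⟨r⟩ ≤ 1 / ⟨r⟩`.
These errors integrate to at most `1/8 + nπ/2`. Beyond `√t` we have `1 / r ≤ r / t`, so the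
tail is at most `∫ (r / t) e^{-r²/4t} dr = 2 e^{-1/4}`.
-/

open MeasureTheory Real

/-- The surface measure of the unit sphere `S^{n-1}` in `ℝⁿ`. -/
noncomputable def sphereMeasure (n : ℕ) : ℝ :=
  (n : ℝ) * (volume (Metric.ball (0 : EuclideanSpace ℝ (Fin n)) 1)).toReal

open Set Filter Topology

lemma nontrivial_euclideanSpace_fin {n : ℕ} (hn : 0 < n) :
    Nontrivial (EuclideanSpace ℝ (Fin n)) :=
  Module.nontrivial_of_finrank_pos (R := ℝ) (by rwa [finrank_euclideanSpace_fin])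

lemma integral_fun_norm_euclideanSpace {n : ℕ} (hn : 0 < n) (f : ℝ → ℝ) :
    ∫ y : EuclideanSpace ℝ (Fin n), f ‖y‖
      = sphereMeasure n * ∫ r in Ioi 0, r ^ (n - 1) * f r := by
  have := nontrivial_euclideanSpace_fin hn
  rw [integral_fun_norm_addHaar, finrank_euclideanSpace_fin, sphereMeasure, measureReal_def]
  simp only [nsmul_eq_mul, smul_eq_mul]
  ring

lemma sphereMeasure_pos {n : ℕ} (hn : 0 < n) : 0 < sphereMeasure n := by
  have := nontrivial_euclideanSpace_fin hn
  exact mul_pos (Nat.cast_pos.2 hn) (ENNReal.toReal_pos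
    (Metric.measure_ball_pos volume 0 one_pos).ne' measure_ball_lt_top.ne)

lemma abs_pow_sub_pow_le_add_mul_one_sub {x : ℝ} (hx₀ : 0 ≤ x) (hx₁ : x ≤ 1) (a b : ℕ) :
    |x ^ a - x ^ b| ≤ (a + b) * (1 - x) := by
  have bernoulli (k : ℕ) : 1 - k * (1 - x) ≤ x ^ k := by
    have := one_add_mul_le_pow (a := x - 1) (by linarith) k
    rw [add_sub_cancel] at this
    linarith
  have ha := bernoulli a
  have hb := bernoulli b
  have ha' := pow_le_one₀ hx₀ hx₁ (n := a)
  have hb' := pow_le_one₀ hx₀ hx₁ (n := b)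
  have hxa : 0 ≤ (a : ℝ) * (1 - x) := by have := sub_nonneg.2 hx₁; positivity
  have hxb : 0 ≤ (b : ℝ) * (1 - x) := by have := sub_nonneg.2 hx₁; positivity
  rw [abs_sub_le_iff]
  constructor <;> linarith

noncomputable def radialDensity (n : ℕ) (r : ℝ) : ℝ := r ^ (n - 1) / √(1 + r ^ 2) ^ n

section radialDensity

variable {n : ℕ} {r : ℝ}

lemma abs_radialDensity_sub_le (hn : 0 < n) (hr : 0 ≤ r) :
    |radialDensity n r - r / (1 + r ^ 2)| ≤ n / (1 + r ^ 2) := by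
  obtain ⟨s, hs⟩ : ∃ s, √(1 + r ^ 2) = s := ⟨_, rfl⟩
  have hs₂ : s ^ 2 = 1 + r ^ 2 := hs ▸ Real.sq_sqrt (by positivity)
  have hs₀ : 0 < s := hs ▸ by positivity
  have hrs : r ≤ s := hs ▸ Real.le_sqrt_of_sq_le (by linarith)
  have hsr : s ≤ r + 1 := hs ▸ Real.sqrt_le_iff.2 ⟨by linarith, by nlinarith⟩
  obtain ⟨m, rfl⟩ := Nat.exists_eq_add_one_of_ne_zero hn.ne'
  have hdiff : radialDensity (m + 1) r - r / (1 + r ^ 2)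
      = ((r / s) ^ m - (r / s) ^ 1) / s := by
    rw [radialDensity, hs, ← hs₂, div_pow, Nat.add_sub_cancel]
    field_simp
    ring
  have hx₁ : r / s ≤ 1 := div_le_one_of_le₀ hrs hs₀.le
  have hx : 1 - r / s ≤ 1 / s := by
    rw [one_sub_div hs₀.ne']; gcongr; linarith
  rw [hdiff, abs_div, abs_of_pos hs₀, ← hs₂]
  calc |(r / s) ^ m - (r / s) ^ 1| / s ≤ (m + 1) * (1 / s) / s := by
        gcongr
        exact (abs_pow_sub_pow_le_add_mul_one_sub (by positivity) hx₁ m 1).trans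
          (by push_cast; gcongr)
    _ = (m + 1 : ℕ) / s ^ 2 := by push_cast; field_simp

lemma radialDensity_nonneg (hr : 0 ≤ r) : 0 ≤ radialDensity n r := by
  unfold radialDensity; positivity

lemma continuous_radialDensity (n : ℕ) : Continuous (radialDensity n) :=
  (continuous_pow _).div (by fun_prop) fun r => by positivity

lemma mul_radialDensity_le_one (hn : 0 < n) (hr : 0 ≤ r) : r * radialDensity n r ≤ 1 := by
  have hs : r ≤ √(1 + r ^ 2) := Real.le_sqrt_of_sq_le (by linarith)
  rw [radialDensity, mul_div_assoc', ← pow_succ', Nat.sub_add_cancel hn]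
  exact div_le_one_of_le₀ (pow_le_pow_left₀ hr hs n) (by positivity)

end radialDensity

lemma integral_div_one_add_sq (a : ℝ) : ∫ r in 0..a, r / (1 + r ^ 2) = log (1 + a ^ 2) / 2 := by
  have hderiv (r : ℝ) : HasDerivAt (fun r => log (1 + r ^ 2) / 2) (r / (1 + r ^ 2)) r := by
    have := (((hasDerivAt_pow 2 r).const_add 1).log (by positivity)).div_const 2
    refine this.congr_deriv ?_
    simp only [Nat.cast_ofNat, Nat.add_one_sub_one, pow_one]
    field_simp
  rw [intervalIntegral.integral_eq_sub_of_hasDerivAt (fun r _ => hderiv r)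
    ((continuous_id.div (by fun_prop) fun r => by positivity).intervalIntegrable _ _)]
  simp

lemma integrable_mul_exp_neg_sq_div {c : ℝ} (hc : 0 < c) :
    Integrable fun r => r * exp (-r ^ 2 / c) := by
  convert integrable_mul_exp_neg_mul_sq (inv_pos.2 hc) using 4
  ring

lemma integral_Ioi_mul_exp_neg_sq_div {c : ℝ} (hc : 0 < c) (a : ℝ) :
    ∫ r in Ioi a, r * exp (-r ^ 2 / c) = c / 2 * exp (-a ^ 2 / c) := by
  have hderiv (r : ℝ) :
      HasDerivAt (fun r => -(c / 2) * exp (-r ^ 2 / c)) (r * exp (-r ^ 2 / c)) r := by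
    have hsq : HasDerivAt (fun r => -r ^ 2 / c) (-(2 * r) / c) r := by
      simpa using (hasDerivAt_pow 2 r).neg.div_const c
    refine (hsq.exp.const_mul _).congr_deriv ?_
    field_simp
  have hlim : Tendsto (fun r => -(c / 2) * exp (-r ^ 2 / c)) atTop (𝓝 0) := by
    have hexp : Tendsto (fun r : ℝ => -r ^ 2 / c) atTop atBot :=
      (tendsto_neg_atTop_atBot.comp ((tendsto_pow_atTop two_ne_zero).atTop_div_const hc)).congr
        fun r => (neg_div c (r ^ 2)).symm
    simpa using (tendsto_exp_atBot.comp hexp).const_mul (-(c / 2))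
  rw [integral_Ioi_of_hasDerivAt_of_tendsto' (fun r _ => hderiv r)
    (integrable_mul_exp_neg_sq_div hc).integrableOn hlim]
  ring

section heatRadial

variable {n : ℕ} {t r : ℝ}

variable (n t) in
lemma continuous_exp_mul_radialDensity :
    Continuous fun r => exp (-r ^ 2 / (4 * t)) * radialDensity n r :=
  (by fun_prop : Continuous fun r => exp (-r ^ 2 / (4 * t))).mul (continuous_radialDensity n)

lemma abs_exp_mul_radialDensity_sub_le (hn : 0 < n) (ht : 0 < t) (hr : 0 ≤ r) :
    |exp (-r ^ 2 / (4 * t)) * radialDensity n r - r / (1 + r ^ 2)|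
      ≤ r / (4 * t) + n / (1 + r ^ 2) := by
  have hw₀ := radialDensity_nonneg (n := n) hr
  have hrw := mul_radialDensity_le_one hn hr
  have hexp : exp (-r ^ 2 / (4 * t)) ≤ 1 :=
    exp_le_one_iff.2 (by rw [neg_div]; exact neg_nonpos.2 (by positivity))
  have hexp' : 1 - r ^ 2 / (4 * t) ≤ exp (-r ^ 2 / (4 * t)) := by
    have := add_one_le_exp (-r ^ 2 / (4 * t)); rw [neg_div] at this ⊢; linarith
  have hgauss :
      |exp (-r ^ 2 / (4 * t)) * radialDensity n r - radialDensity n r| ≤ r / (4 * t) := by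
    rw [abs_sub_comm, abs_of_nonneg (by nlinarith)]
    calc radialDensity n r - exp (-r ^ 2 / (4 * t)) * radialDensity n r
        ≤ r ^ 2 / (4 * t) * radialDensity n r := by nlinarith
      _ = r / (4 * t) * (r * radialDensity n r) := by ring
      _ ≤ r / (4 * t) := mul_le_of_le_one_right (by positivity) hrw
  calc _ ≤ _ := abs_sub_le _ (radialDensity n r) _
    _ ≤ _ := add_le_add hgauss (abs_radialDensity_sub_le hn hr)

lemma abs_intervalIntegral_exp_mul_radialDensity_sub_half_log_le (hn : 0 < n) (ht : 0 < t) :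
    |(∫ r in 0..√t, exp (-r ^ 2 / (4 * t)) * radialDensity n r) - log (1 + t) / 2|
      ≤ 1 / 8 + n * π / 2 := by
  have hcont_log : Continuous fun r : ℝ => r / (1 + r ^ 2) :=
    continuous_id.div (by fun_prop) fun r => by positivity
  have hcont_arctan : Continuous fun r : ℝ => n / (1 + r ^ 2) :=
    continuous_const.div (by fun_prop) fun r => by positivity
  have hlog : ∫ r in 0..√t, r / (1 + r ^ 2) = log (1 + t) / 2 := by
    rw [integral_div_one_add_sq, sq_sqrt ht.le]
  rw [← hlog, ← intervalIntegral.integral_sub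
    ((continuous_exp_mul_radialDensity n t).intervalIntegrable _ _)
    (hcont_log.intervalIntegrable _ _)]
  have hcont_lin : Continuous fun r : ℝ => r / (4 * t) := by fun_prop
  calc _ ≤ ∫ r in 0..√t, (r / (4 * t) + n / (1 + r ^ 2)) := by
        rw [← norm_eq_abs]
        exact intervalIntegral.norm_integral_le_of_norm_le (sqrt_nonneg t)
          (ae_of_all _ fun r hr => abs_exp_mul_radialDensity_sub_le hn ht hr.1.le)
          ((hcont_lin.add hcont_arctan).intervalIntegrable _ _)
    _ = 1 / 8 + n * arctan √t := by
        rw [intervalIntegral.integral_add (hcont_lin.intervalIntegrable _ _)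
          (hcont_arctan.intervalIntegrable _ _), intervalIntegral.integral_div, integral_id,
          sq_sqrt ht.le]
        simp_rw [div_eq_mul_inv (n : ℝ)]
        rw [intervalIntegral.integral_const_mul, integral_inv_one_add_sq, arctan_zero]
        field_simp
        ring
    _ ≤ 1 / 8 + n * π / 2 := by
        have := arctan_lt_pi_div_two √t
        rw [mul_div_assoc]
        gcongr

lemma exp_mul_radialDensity_le_of_sqrt_le (hn : 0 < n) (ht : 0 < t) (hr : √t ≤ r) :
    exp (-r ^ 2 / (4 * t)) * radialDensity n r ≤ t⁻¹ * (r * exp (-r ^ 2 / (4 * t))) := by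
  have hr₀ : 0 < r := (sqrt_pos.2 ht).trans_le hr
  have htr : t ≤ r ^ 2 := (sqrt_le_left hr₀.le).1 hr
  have hw : radialDensity n r ≤ 1 / r :=
    (le_div_iff₀' hr₀).2 (mul_radialDensity_le_one hn hr₀.le)
  have hr_inv : 1 / r ≤ t⁻¹ * r := by
    rw [inv_mul_eq_div, div_le_div_iff₀ hr₀ ht]
    nlinarith
  calc exp (-r ^ 2 / (4 * t)) * radialDensity n r ≤ exp (-r ^ 2 / (4 * t)) * (t⁻¹ * r) := by
        gcongr
        exact hw.trans hr_inv
    _ = t⁻¹ * (r * exp (-r ^ 2 / (4 * t))) := by ring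

lemma integrableOn_Ioi_sqrt_exp_mul_radialDensity (hn : 0 < n) (ht : 0 < t) :
    IntegrableOn (fun r => exp (-r ^ 2 / (4 * t)) * radialDensity n r) (Ioi √t) :=
  Integrable.mono'
    ((integrable_mul_exp_neg_sq_div (c := 4 * t) (by positivity)).const_mul t⁻¹).integrableOn
    (continuous_exp_mul_radialDensity n t).aestronglyMeasurable <|
      (ae_restrict_mem measurableSet_Ioi).mono fun r hr => by
        have hr₀ : 0 ≤ r := (sqrt_nonneg t).trans (le_of_lt hr)
        rw [norm_of_nonneg (mul_nonneg (exp_nonneg _) (radialDensity_nonneg hr₀))]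
        exact exp_mul_radialDensity_le_of_sqrt_le hn ht (le_of_lt hr)

lemma integral_Ioi_sqrt_exp_mul_radialDensity_le (hn : 0 < n) (ht : 0 < t) :
    ∫ r in Ioi √t, exp (-r ^ 2 / (4 * t)) * radialDensity n r ≤ 2 := by
  calc _ ≤ ∫ r in Ioi √t, t⁻¹ * (r * exp (-r ^ 2 / (4 * t))) :=
        setIntegral_mono_on (integrableOn_Ioi_sqrt_exp_mul_radialDensity hn ht)
          ((integrable_mul_exp_neg_sq_div (c := 4 * t) (by positivity)).const_mul
            t⁻¹).integrableOn
          measurableSet_Ioi fun r hr => exp_mul_radialDensity_le_of_sqrt_le hn ht (le_of_lt hr)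
    _ = 2 * exp (-(1 / 4)) := by
        rw [integral_const_mul, integral_Ioi_mul_exp_neg_sq_div (by positivity), sq_sqrt ht.le]
        rw [show -t / (4 * t) = -(1 / 4) by field_simp]
        field_simp
        norm_num
    _ ≤ 2 := mul_le_of_le_one_right zero_le_two (exp_le_one_iff.2 (by norm_num))

theorem abs_integral_exp_mul_radialDensity_sub_half_log_le (hn : 0 < n) (ht : 0 < t) :
    |(∫ r in Ioi 0, exp (-r ^ 2 / (4 * t)) * radialDensity n r) - log (1 + t) / 2|
      ≤ n * π / 2 + 3 := by
  have htail₀ : 0 ≤ ∫ r in Ioi √t, exp (-r ^ 2 / (4 * t)) * radialDensity n r :=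
    setIntegral_nonneg measurableSet_Ioi fun r hr =>
      mul_nonneg (exp_nonneg _) (radialDensity_nonneg ((sqrt_nonneg t).trans (le_of_lt hr)))
  rw [← intervalIntegral.integral_interval_add_Ioi'
    ((continuous_exp_mul_radialDensity n t).intervalIntegrable 0 √t)
    (integrableOn_Ioi_sqrt_exp_mul_radialDensity hn ht)]
  have hhead := abs_intervalIntegral_exp_mul_radialDensity_sub_half_log_le hn ht
  have htail := integral_Ioi_sqrt_exp_mul_radialDensity_le hn ht
  rw [abs_le] at hhead ⊢
  constructor <;> linarith [hhead.1, hhead.2]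

end heatRadial

lemma integral_exp_mul_sqrt_one_add_sq_rpow_eq {n : ℕ} (hn : 0 < n) (t : ℝ) :
    ∫ y : EuclideanSpace ℝ (Fin n),
        exp (-‖y‖ ^ 2 / (4 * t)) * √(1 + ‖y‖ ^ 2) ^ (-(n : ℝ))
      = sphereMeasure n * ∫ r in Ioi 0, exp (-r ^ 2 / (4 * t)) * radialDensity n r := by
  rw [integral_fun_norm_euclideanSpace hn
    fun r => exp (-r ^ 2 / (4 * t)) * √(1 + r ^ 2) ^ (-(n : ℝ))]
  congr 1
  refine setIntegral_congr_fun measurableSet_Ioi fun r _ => ?_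
  rw [rpow_neg (sqrt_nonneg _), rpow_natCast, radialDensity]
  ring

theorem heat_kernel_expansion_critical (n : ℕ) (hn : 0 < n) :
    ∃ C > 0, ∀ t ≥ (1 : ℝ),
      |(4 * π * t) ^ (-(n : ℝ) / 2)
          * (∫ y : EuclideanSpace ℝ (Fin n),
              Real.exp (-‖y‖ ^ 2 / (4 * t)) * Real.sqrt (1 + ‖y‖ ^ 2) ^ (-(n : ℝ)))
        - (4 * π) ^ (-(n : ℝ) / 2) * (1 / 2) * sphereMeasure n
          * t ^ (-(n : ℝ) / 2) * Real.log (1 + t)|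
      ≤ C * t ^ (-(n : ℝ) / 2) := by
  refine ⟨(4 * π) ^ (-(n : ℝ) / 2) * sphereMeasure n * (n * π / 2 + 3),
    by have := sphereMeasure_pos hn; positivity, fun t ht => ?_⟩
  have ht₀ : 0 < t := one_pos.trans_le ht
  have hK : 0 < (4 * π) ^ (-(n : ℝ) / 2) * sphereMeasure n * t ^ (-(n : ℝ) / 2) := by
    have := sphereMeasure_pos hn; positivity
  rw [integral_exp_mul_sqrt_one_add_sq_rpow_eq hn, mul_rpow (by positivity) ht₀.le]
  set I := ∫ r in Ioi 0, exp (-r ^ 2 / (4 * t)) * radialDensity n r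
  calc _ = (4 * π) ^ (-(n : ℝ) / 2) * sphereMeasure n * t ^ (-(n : ℝ) / 2)
        * |I - log (1 + t) / 2| := by
        rw [← abs_of_pos hK, ← abs_mul]
        congr 1
        ring
    _ ≤ (4 * π) ^ (-(n : ℝ) / 2) * sphereMeasure n * t ^ (-(n : ℝ) / 2) * (n * π / 2 + 3) :=
        mul_le_mul_of_nonneg_left
          (abs_integral_exp_mul_radialDensity_sub_half_log_le hn ht₀) hK.le
    _ = _ := by ring
end

section
/- For n > 0 and γ > n, there exists C > 0 such that for all t ≥ 1, | (4πt)^(-n/2) ∫_{ℝⁿ} e^(-|y|²/(4t)) ⟨y⟩^(-γ) dy − t^(-n/2) (4π)^(-n/2) ∫_{ℝⁿ} ⟨y⟩^(-γ) dy | ≤ C t^(-n/2) h(t), where h(t) = t^((n−γ)/2) if n < γ < n+2, h(t) = t^(-1)(1 + ln t) if γ = n+2, and h(t) = t^(-1) if γ > n+2. -/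
/-!
Since `e^{-|y|²/4t} ≤ 1`, the difference of the two integrals is `∫ (1 - e^{-|y|²/4t}) ⟨y⟩^{-γ} dy`,
which in polar coordinates is a one-dimensional integral over `r > 0`. Split it at `r = √t`.
Inside, `1 - e^{-x} ≤ x` bounds it by `(4t)⁻¹ (1 + ∫₁^{√t} r^{n+1-γ} dr)`, and this last integral
is `≲ t^{(n+2-γ)/2}`, `log t` or `1` according to the sign of `n + 2 - γ`; these are the three
regimes of `h`. Outside, `⟨r⟩^{-γ} ≤ r^{-γ}` bounds it by `t^{(n-γ)/2} / (γ - n) ≤ h(t)`.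
-/

open MeasureTheory Real Set

lemma continuous_sqrt_one_add_sq_rpow (γ : ℝ) : Continuous fun r : ℝ => √(1 + r ^ 2) ^ (-γ) :=
  (continuous_const.add (continuous_pow 2)).sqrt.rpow_const fun r =>
    Or.inl (sqrt_ne_zero'.mpr (by positivity : (0 : ℝ) < 1 + r ^ 2))

lemma sqrt_one_add_sq_rpow_neg_le_one {γ : ℝ} (hγ : 0 ≤ γ) (r : ℝ) : √(1 + r ^ 2) ^ (-γ) ≤ 1 :=
  rpow_le_one_of_one_le_of_nonpos (one_le_sqrt.mpr (by nlinarith)) (by linarith)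

lemma sqrt_one_add_sq_rpow_neg_le_rpow_neg {γ r : ℝ} (hγ : 0 ≤ γ) (hr : 0 < r) :
    √(1 + r ^ 2) ^ (-γ) ≤ r ^ (-γ) :=
  rpow_le_rpow_of_nonpos hr (le_sqrt_of_sq_le (by linarith)) (by linarith)

lemma one_sub_exp_neg_sq_div_nonneg {t : ℝ} (ht : 0 ≤ t) (r : ℝ) :
    0 ≤ 1 - exp (-r ^ 2 / (4 * t)) := by
  rw [sub_nonneg, exp_le_one_iff, neg_div, neg_nonpos]
  positivity

lemma setIntegral_Ioc_pow_mul_sqrt_one_add_sq_rpow_le (m : ℕ) {γ s : ℝ} (hγ : 0 ≤ γ) (hs : 1 ≤ s) :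
    ∫ r in Ioc 0 s, r ^ m * √(1 + r ^ 2) ^ (-γ) ≤ 1 + ∫ r in Ioc 1 s, r ^ ((m : ℝ) - γ) := by
  have hcont : Continuous fun r : ℝ => r ^ m * √(1 + r ^ 2) ^ (-γ) :=
    (continuous_pow m).mul (continuous_sqrt_one_add_sq_rpow γ)
  rw [← Ioc_union_Ioc_eq_Ioc zero_le_one hs, setIntegral_union (Ioc_disjoint_Ioc_of_le le_rfl)
    measurableSet_Ioc hcont.integrableOn_Ioc hcont.integrableOn_Ioc]
  have hweight : ∀ r > (0 : ℝ), r ^ m * √(1 + r ^ 2) ^ (-γ) ≤ r ^ ((m : ℝ) - γ) := fun r hr => by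
    rw [rpow_sub hr, rpow_natCast, div_eq_mul_inv, ← rpow_neg hr.le]
    exact mul_le_mul_of_nonneg_left (sqrt_one_add_sq_rpow_neg_le_rpow_neg hγ hr) (by positivity)
  have hunit : ∫ r in Ioc 0 1, r ^ m * √(1 + r ^ 2) ^ (-γ) ≤ 1 :=
    calc ∫ r in Ioc 0 1, r ^ m * √(1 + r ^ 2) ^ (-γ)
        ≤ ‖∫ r in Ioc 0 1, r ^ m * √(1 + r ^ 2) ^ (-γ)‖ := le_norm_self _
      _ ≤ 1 * volume.real (Ioc (0 : ℝ) 1) := by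
        refine norm_setIntegral_le_of_norm_le_const measure_Ioc_lt_top fun r ⟨hr0, hr1⟩ => ?_
        rw [norm_of_nonneg (by positivity)]
        exact mul_le_one₀ (pow_le_one₀ hr0.le hr1) (by positivity)
          (sqrt_one_add_sq_rpow_neg_le_one hγ r)
      _ = 1 := by simp
  have hrpow : IntegrableOn (fun r : ℝ => r ^ ((m : ℝ) - γ)) (Ioc 1 s) :=
    (continuousOn_id.rpow_const fun r hr => Or.inl (by linarith [hr.1] : (0 : ℝ) < r).ne')
      |>.integrableOn_Icc.mono_set Ioc_subset_Icc_self
  exact add_le_add hunit <| setIntegral_mono_on hcont.integrableOn_Ioc hrpow measurableSet_Ioc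
    fun r hr => hweight r (by linarith [hr.1])

section radial

variable {n : ℕ} {γ t : ℝ}

/-- The polar-coordinate integrand of `(1 - e^{-|y|²/4t}) ⟨y⟩^{-γ}` in dimension `n`. -/
noncomputable def radialDefect (n : ℕ) (γ t r : ℝ) : ℝ :=
  r ^ (n - 1) * ((1 - exp (-r ^ 2 / (4 * t))) * √(1 + r ^ 2) ^ (-γ))

lemma continuous_radialDefect : Continuous (radialDefect n γ t) :=
  (continuous_pow _).mul (((continuous_const.sub ((continuous_pow 2).neg.div_const _).rexp)).mul
    (continuous_sqrt_one_add_sq_rpow γ))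

lemma radialDefect_nonneg (ht : 0 ≤ t) {r : ℝ} (hr : 0 ≤ r) : 0 ≤ radialDefect n γ t r :=
  mul_nonneg (pow_nonneg hr _) (mul_nonneg (one_sub_exp_neg_sq_div_nonneg ht r) (by positivity))

lemma radialDefect_le_rpow (hn : 0 < n) (hγ : 0 ≤ γ) {r : ℝ} (hr : 0 < r) :
    radialDefect n γ t r ≤ r ^ ((n : ℝ) - 1 - γ) := by
  have hexp : 1 - exp (-r ^ 2 / (4 * t)) ≤ 1 := by linarith [exp_pos (-r ^ 2 / (4 * t))]
  calc radialDefect n γ t r ≤ r ^ (n - 1) * (1 * r ^ (-γ)) := by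
        unfold radialDefect
        gcongr r ^ (n - 1) * ?_
        exact mul_le_mul hexp (sqrt_one_add_sq_rpow_neg_le_rpow_neg hγ hr) (by positivity)
          zero_le_one
    _ = r ^ ((n : ℝ) - 1 - γ) := by
        rw [one_mul, ← rpow_natCast, ← rpow_add hr, Nat.cast_sub hn, Nat.cast_one,
          sub_eq_add_neg _ γ]

lemma radialDefect_le_div (hn : 0 < n) {r : ℝ} (hr : 0 ≤ r) :
    radialDefect n γ t r ≤ r ^ (n + 1) * √(1 + r ^ 2) ^ (-γ) / (4 * t) := by
  have hexp : 1 - exp (-r ^ 2 / (4 * t)) ≤ r ^ 2 / (4 * t) := by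
    have := one_sub_le_exp_neg (r ^ 2 / (4 * t))
    rw [← neg_div] at this
    linarith
  calc radialDefect n γ t r ≤ r ^ (n - 1) * (r ^ 2 / (4 * t) * √(1 + r ^ 2) ^ (-γ)) := by
        unfold radialDefect
        gcongr
    _ = r ^ (n + 1) * √(1 + r ^ 2) ^ (-γ) / (4 * t) := by
        rw [show n + 1 = n - 1 + 2 by omega, pow_add]
        ring

lemma integrableOn_radialDefect_Ioi (hn : 0 < n) (hγ : (n : ℝ) < γ) (ht : 0 ≤ t) {s : ℝ}
    (hs : 0 < s) :
    IntegrableOn (radialDefect n γ t) (Ioi s) := by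
  refine (integrableOn_Ioi_rpow_of_lt (by linarith : (n : ℝ) - 1 - γ < -1) hs).mono'
    continuous_radialDefect.aestronglyMeasurable.restrict ?_
  filter_upwards [ae_restrict_mem measurableSet_Ioi] with r (hr : s < r)
  rw [norm_of_nonneg (radialDefect_nonneg ht (by linarith))]
  exact radialDefect_le_rpow hn (by linarith) (by linarith)

lemma setIntegral_radialDefect_Ioi_le (hn : 0 < n) (hγ : (n : ℝ) < γ) (ht : 0 ≤ t) {s : ℝ}
    (hs : 0 < s) : ∫ r in Ioi s, radialDefect n γ t r ≤ s ^ ((n : ℝ) - γ) / (γ - n) := by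
  have hlt : (n : ℝ) - 1 - γ < -1 := by linarith
  calc ∫ r in Ioi s, radialDefect n γ t r ≤ ∫ r in Ioi s, r ^ ((n : ℝ) - 1 - γ) :=
        setIntegral_mono_on (integrableOn_radialDefect_Ioi hn hγ ht hs)
          (integrableOn_Ioi_rpow_of_lt hlt hs) measurableSet_Ioi
          fun r (hr : s < r) => radialDefect_le_rpow hn (by linarith) (by linarith)
    _ = s ^ ((n : ℝ) - γ) / (γ - n) := by
        rw [integral_Ioi_rpow_of_lt hlt hs, show (n : ℝ) - 1 - γ + 1 = n - γ by ring, neg_div,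
          ← div_neg, neg_sub]

lemma setIntegral_radialDefect_Ioc_le (hn : 0 < n) (hγ : 0 ≤ γ) (ht : 0 ≤ t) {s : ℝ}
    (hs : 1 ≤ s) :
    ∫ r in Ioc 0 s, radialDefect n γ t r ≤ (1 + ∫ r in Ioc 1 s, r ^ ((n : ℝ) + 1 - γ)) / (4 * t) :=
  calc ∫ r in Ioc 0 s, radialDefect n γ t r
      ≤ ∫ r in Ioc 0 s, r ^ (n + 1) * √(1 + r ^ 2) ^ (-γ) / (4 * t) :=
        setIntegral_mono_on continuous_radialDefect.integrableOn_Ioc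
          ((continuous_pow _).mul (continuous_sqrt_one_add_sq_rpow γ) |>.div_const _
            |>.integrableOn_Ioc)
          measurableSet_Ioc fun r hr => radialDefect_le_div hn hr.1.le
    _ = (∫ r in Ioc 0 s, r ^ (n + 1) * √(1 + r ^ 2) ^ (-γ)) / (4 * t) := integral_div _ _
    _ ≤ (1 + ∫ r in Ioc 1 s, r ^ ((n : ℝ) + 1 - γ)) / (4 * t) := by
        gcongr
        exact_mod_cast setIntegral_Ioc_pow_mul_sqrt_one_add_sq_rpow_le (n + 1) hγ hs

lemma setIntegral_radialDefect_Ioi_zero_le (hn : 0 < n) (hγ : (n : ℝ) < γ) (ht : 1 ≤ t) :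
    ∫ r in Ioi 0, radialDefect n γ t r ≤
      (1 + ∫ r in Ioc 1 (√t), r ^ ((n : ℝ) + 1 - γ)) / (4 * t)
        + t ^ (((n : ℝ) - γ) / 2) / (γ - n) := by
  have hs : 1 ≤ √t := one_le_sqrt.mpr ht
  rw [← Ioc_union_Ioi_eq_Ioi (zero_le_one.trans hs), setIntegral_union (Ioc_disjoint_Ioi le_rfl)
    measurableSet_Ioi continuous_radialDefect.integrableOn_Ioc
    (integrableOn_radialDefect_Ioi hn hγ (by linarith) (by linarith))]
  refine add_le_add (setIntegral_radialDefect_Ioc_le hn ((Nat.cast_nonneg n).trans hγ.le)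
    (by linarith) hs) ((setIntegral_radialDefect_Ioi_le hn hγ (by linarith) (by linarith)).trans_eq
    ?_)
  rw [sqrt_eq_rpow, ← rpow_mul (by linarith), one_div_mul_eq_div]

end radial

noncomputable def heatCorrectionRate (d γ t : ℝ) : ℝ :=
  if γ < d + 2 then t ^ ((d - γ) / 2) else if γ = d + 2 then t⁻¹ * (1 + log t) else t⁻¹

lemma inv_le_heatCorrectionRate {d γ t : ℝ} (ht : 1 ≤ t) : t⁻¹ ≤ heatCorrectionRate d γ t := by
  have ht0 : 0 < t := by linarith
  unfold heatCorrectionRate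
  split_ifs with hlt heq
  · rw [← rpow_neg_one]
    exact rpow_le_rpow_of_exponent_le ht (by linarith)
  · have := log_nonneg ht
    nlinarith [inv_pos.mpr ht0]
  · exact le_rfl

lemma rpow_le_heatCorrectionRate {d γ t : ℝ} (ht : 1 ≤ t) :
    t ^ ((d - γ) / 2) ≤ heatCorrectionRate d γ t := by
  unfold heatCorrectionRate
  split_ifs with hlt heq
  · exact le_rfl
  · rw [heq, show (d - (d + 2)) / 2 = -1 by ring, rpow_neg_one]
    have := log_nonneg ht
    nlinarith [inv_pos.mpr (show 0 < t by linarith)]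
  · rw [← rpow_neg_one]
    have := lt_of_le_of_ne (not_lt.mp hlt) (Ne.symm heq)
    exact rpow_le_rpow_of_exponent_le ht (by linarith)

lemma integral_Ioc_one_sqrt_rpow {a t : ℝ} (ha : a ≠ 0) (ht : 1 ≤ t) :
    ∫ r in Ioc 1 (√t), r ^ (a - 1) = (t ^ (a / 2) - 1) / a := by
  have ht0 : 0 < t := by linarith
  rw [← intervalIntegral.integral_of_le (one_le_sqrt.mpr ht),
    integral_rpow (Or.inr ⟨by contrapose! ha; linarith, notMem_uIcc_of_lt one_pos (by positivity)⟩),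
    sub_add_cancel, one_rpow, sqrt_eq_rpow, ← rpow_mul ht0.le, one_div_mul_eq_div]

lemma integral_Ioc_one_sqrt_inv {t : ℝ} (ht : 1 ≤ t) :
    ∫ r in Ioc 1 (√t), r⁻¹ = log t / 2 := by
  rw [← intervalIntegral.integral_of_le (one_le_sqrt.mpr ht),
    integral_inv (notMem_uIcc_of_lt one_pos (by positivity)), div_one, log_sqrt (by linarith)]

lemma exists_inv_mul_integral_rpow_le_heatCorrectionRate (d γ : ℝ) :
    ∃ c > 0, ∀ t ≥ (1 : ℝ),
      t⁻¹ * ∫ r in Ioc 1 (√t), r ^ (d + 1 - γ) ≤ c * heatCorrectionRate d γ t := by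
  rcases lt_trichotomy γ (d + 2) with hlt | heq | hgt
  · refine ⟨1 / (d + 2 - γ), by bound, fun t ht => ?_⟩
    have ht0 : 0 < t := by linarith
    rw [heatCorrectionRate, if_pos hlt, show d + 1 - γ = (d + 2 - γ) - 1 by ring,
      integral_Ioc_one_sqrt_rpow (by linarith) ht]
    calc t⁻¹ * ((t ^ ((d + 2 - γ) / 2) - 1) / (d + 2 - γ))
        ≤ t⁻¹ * (t ^ ((d + 2 - γ) / 2) / (d + 2 - γ)) := by gcongr; linarith
      _ = 1 / (d + 2 - γ) * t ^ ((d - γ) / 2) := by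
        rw [← rpow_neg_one, mul_div_assoc', ← rpow_add ht0]
        ring_nf
  · refine ⟨1 / 2, by norm_num, fun t ht => ?_⟩
    rw [heatCorrectionRate, if_neg (by linarith), if_pos heq, heq,
      show d + 1 - (d + 2) = -1 by ring]
    simp only [rpow_neg_one]
    rw [integral_Ioc_one_sqrt_inv ht]
    nlinarith [inv_pos.mpr (show 0 < t by linarith)]
  · refine ⟨1 / (γ - d - 2), by bound, fun t ht => ?_⟩
    rw [heatCorrectionRate, if_neg (by linarith), if_neg (by linarith),
      show d + 1 - γ = (d + 2 - γ) - 1 by ring, integral_Ioc_one_sqrt_rpow (by linarith) ht]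
    have hpos : 0 < t ^ ((d + 2 - γ) / 2) := by bound
    have hint : (t ^ ((d + 2 - γ) / 2) - 1) / (d + 2 - γ) ≤ 1 / (γ - d - 2) := by
      rw [← neg_div_neg_eq, neg_sub, show -(d + 2 - γ) = γ - d - 2 by ring]
      gcongr <;> linarith
    rw [mul_comm]
    exact mul_le_mul_of_nonneg_right hint (by bound)

lemma exists_setIntegral_radialDefect_le_heatCorrectionRate {n : ℕ} {γ : ℝ} (hn : 0 < n)
    (hγ : (n : ℝ) < γ) :
    ∃ K > 0, ∀ t ≥ (1 : ℝ), ∫ r in Ioi 0, radialDefect n γ t r ≤ K * heatCorrectionRate n γ t := by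
  obtain ⟨c, hc, hball⟩ := exists_inv_mul_integral_rpow_le_heatCorrectionRate n γ
  have hγn : 0 < γ - n := by linarith
  refine ⟨(1 + c) / 4 + 1 / (γ - n), by positivity, fun t ht => ?_⟩
  have ht0 : 0 < t := by linarith
  calc ∫ r in Ioi 0, radialDefect n γ t r
      ≤ (1 + ∫ r in Ioc 1 (√t), r ^ ((n : ℝ) + 1 - γ)) / (4 * t)
          + t ^ (((n : ℝ) - γ) / 2) / (γ - n) := setIntegral_radialDefect_Ioi_zero_le hn hγ ht
    _ = (t⁻¹ + t⁻¹ * ∫ r in Ioc 1 (√t), r ^ ((n : ℝ) + 1 - γ)) / 4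
          + t ^ (((n : ℝ) - γ) / 2) / (γ - n) := by field_simp
    _ ≤ (heatCorrectionRate n γ t + c * heatCorrectionRate n γ t) / 4
          + heatCorrectionRate n γ t / (γ - n) := by
        gcongr ?_ / 4 + ?_ / _
        · exact add_le_add (inv_le_heatCorrectionRate ht) (hball t ht)
        · exact rpow_le_heatCorrectionRate ht
    _ = ((1 + c) / 4 + 1 / (γ - n)) * heatCorrectionRate n γ t := by ring

section haar

variable {E : Type*} [NormedAddCommGroup E] [NormedSpace ℝ E] [FiniteDimensional ℝ E]
  [MeasurableSpace E] [BorelSpace E]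

open Module Metric

theorem abs_integral_exp_mul_sub_integral_eq_radialDefect [Nontrivial E] (μ : Measure E)
    [μ.IsAddHaarMeasure] {γ t : ℝ} (hγ : (finrank ℝ E : ℝ) < γ) (ht : 0 ≤ t) :
    |∫ y, exp (-‖y‖ ^ 2 / (4 * t)) * √(1 + ‖y‖ ^ 2) ^ (-γ) ∂μ - ∫ y, √(1 + ‖y‖ ^ 2) ^ (-γ) ∂μ|
      = finrank ℝ E * μ.real (ball 0 1) * ∫ r in Ioi 0, radialDefect (finrank ℝ E) γ t r := by
  have hw : Integrable (fun y : E => √(1 + ‖y‖ ^ 2) ^ (-γ)) μ := by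
    refine (integrable_rpow_neg_one_add_norm_sq hγ).congr (ae_of_all _ fun y => ?_)
    simp only [sqrt_eq_rpow, ← rpow_mul (by positivity : (0 : ℝ) ≤ 1 + ‖y‖ ^ 2)]
    ring_nf
  have hew : Integrable (fun y : E => exp (-‖y‖ ^ 2 / (4 * t)) * √(1 + ‖y‖ ^ 2) ^ (-γ)) μ := by
    refine hw.mono' (by fun_prop) (ae_of_all _ fun y => ?_)
    rw [norm_mul, norm_of_nonneg (exp_pos _).le, norm_of_nonneg (by positivity)]
    exact mul_le_of_le_one_left (by positivity) (by linarith [one_sub_exp_neg_sq_div_nonneg ht ‖y‖])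
  have hdefect : ∫ y, exp (-‖y‖ ^ 2 / (4 * t)) * √(1 + ‖y‖ ^ 2) ^ (-γ) ∂μ
      - ∫ y, √(1 + ‖y‖ ^ 2) ^ (-γ) ∂μ
      = -∫ y, (1 - exp (-‖y‖ ^ 2 / (4 * t))) * √(1 + ‖y‖ ^ 2) ^ (-γ) ∂μ := by
    rw [← integral_sub hew hw, ← integral_neg]
    congr 1 with y
    ring
  rw [hdefect, abs_neg, abs_of_nonneg (integral_nonneg fun y =>
    mul_nonneg (one_sub_exp_neg_sq_div_nonneg ht _) (by positivity)),
    integral_fun_norm_addHaar μ fun r => (1 - exp (-r ^ 2 / (4 * t))) * √(1 + r ^ 2) ^ (-γ)]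
  simp only [nsmul_eq_mul, smul_eq_mul, radialDefect]
  ring

end haar

theorem heat_kernel_expansion_supercritical (n : ℕ) (hn : 0 < n) (γ : ℝ) (hγ : (n : ℝ) < γ) :
    ∃ C > 0, ∀ t ≥ (1 : ℝ),
      |(4 * π * t) ^ (-(n : ℝ) / 2)
          * (∫ y : EuclideanSpace ℝ (Fin n),
              Real.exp (-‖y‖ ^ 2 / (4 * t)) * Real.sqrt (1 + ‖y‖ ^ 2) ^ (-γ))
        - t ^ (-(n : ℝ) / 2) * (4 * π) ^ (-(n : ℝ) / 2)
          * ∫ y : EuclideanSpace ℝ (Fin n), Real.sqrt (1 + ‖y‖ ^ 2) ^ (-γ)|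
      ≤ C * t ^ (-(n : ℝ) / 2) *
        (if γ < (n : ℝ) + 2 then t ^ (((n : ℝ) - γ) / 2)
          else if γ = (n : ℝ) + 2 then t⁻¹ * (1 + Real.log t)
          else t⁻¹) := by
  have : Nonempty (Fin n) := Fin.pos_iff_nonempty.mp hn
  obtain ⟨K, hK, hradial⟩ := exists_setIntegral_radialDefect_le_heatCorrectionRate hn hγ
  set V := volume.real (Metric.ball (0 : EuclideanSpace ℝ (Fin n)) 1)
  have hV : 0 < V :=
    ENNReal.toReal_pos (Metric.measure_ball_pos _ _ one_pos).ne' measure_ball_lt_top.ne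
  refine ⟨(4 * π) ^ (-(n : ℝ) / 2) * (n * V * K), by positivity, fun t ht => ?_⟩
  set F := ∫ y : EuclideanSpace ℝ (Fin n), exp (-‖y‖ ^ 2 / (4 * t)) * √(1 + ‖y‖ ^ 2) ^ (-γ)
  set G := ∫ y : EuclideanSpace ℝ (Fin n), √(1 + ‖y‖ ^ 2) ^ (-γ)
  have hdefect : |F - G| = n * V * ∫ r in Ioi 0, radialDefect n γ t r := by
    simpa using abs_integral_exp_mul_sub_integral_eq_radialDefect
      (volume : Measure (EuclideanSpace ℝ (Fin n))) (by simpa using hγ) (by linarith : 0 ≤ t)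
  have hfactor :
      (4 * π * t) ^ (-(n : ℝ) / 2) * F - t ^ (-(n : ℝ) / 2) * (4 * π) ^ (-(n : ℝ) / 2) * G
      = (4 * π) ^ (-(n : ℝ) / 2) * t ^ (-(n : ℝ) / 2) * (F - G) := by
    rw [mul_rpow (by positivity) (by linarith)]
    ring
  rw [hfactor, abs_mul, abs_of_pos (by positivity), hdefect]
  calc (4 * π) ^ (-(n : ℝ) / 2) * t ^ (-(n : ℝ) / 2) * (n * V * ∫ r in Ioi 0, radialDefect n γ t r)
      ≤ (4 * π) ^ (-(n : ℝ) / 2) * t ^ (-(n : ℝ) / 2)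
          * (n * V * (K * heatCorrectionRate n γ t)) := by
        gcongr
        exact hradial t ht
    _ = _ := by
        rw [heatCorrectionRate]
        ring
end

section
/- For n > 0 and γ < n, there exists C > 0 such that for all t ≥ 1, | ∫_{ℝⁿ} e^(-|z|²/4) [ (|z|² + t^(-1))^(-γ/2) − |z|^(-γ) ] dz | ≤ C ( t^((γ−n)/2) + r(t) ), where r(t) = t^(-1) for γ < n−2, r(t) = t^(-1)(1 + ln t) for γ = n−2, and r(t) = t^((γ−n)/2) for n−2 < γ < n. -/
/-!
Put `σ = t^(-1/2)`, so that `t⁻¹ = σ²`. In polar coordinates the integral becomes a radial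
integral against `s^(n-1) ds`, which is split at `s = σ`. On `(0, σ]` both powers are at most
multiples of `s^(-γ) + σ^(-γ)`, and `γ < n` makes this piece `O(σ^(n-γ)) = O(t^((γ-n)/2))`. On
`(σ, ∞)` the mean value theorem bounds the difference by `O(σ² s^(-γ-2))`, so this piece is
`O(t⁻¹ ∫_σ^∞ s^(n-3-γ) e^(-s²/4) ds) = O(t⁻¹ (1 + ∫_σ^1 s^(n-3-γ) ds))`; the last integral is
bounded, equal to `½ log t`, or `O(σ^(n-2-γ))` according as `γ < n-2`, `γ = n-2` or `γ > n-2`.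
-/

open MeasureTheory Real Set Metric

theorem rpow_le_two_rpow_abs_mul {x y : ℝ} (p : ℝ) (hx : 0 < x) (hxy : x ≤ y) (hy : y ≤ 2 * x) :
    y ^ p ≤ 2 ^ |p| * x ^ p := by
  rcases le_or_gt 0 p with hp | hp
  · calc y ^ p ≤ (2 * x) ^ p := rpow_le_rpow (hx.le.trans hxy) hy hp
      _ = 2 ^ p * x ^ p := mul_rpow zero_le_two hx.le
      _ = 2 ^ |p| * x ^ p := by rw [abs_of_nonneg hp]
  · calc y ^ p ≤ x ^ p := rpow_le_rpow_of_nonpos hx hxy hp.le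
      _ ≤ 2 ^ |p| * x ^ p :=
        le_mul_of_one_le_left (rpow_nonneg hx.le _) (one_le_rpow one_le_two (abs_nonneg p))

theorem abs_rpow_add_sub_rpow_le {x ε : ℝ} (p : ℝ) (hx : 0 < x) (hε : 0 ≤ ε) (hεx : ε ≤ x) :
    |(x + ε) ^ p - x ^ p| ≤ |p| * 2 ^ |p - 1| * x ^ (p - 1) * ε := by
  have hderiv : ∀ u ∈ Icc x (x + ε),
      HasDerivWithinAt (fun u : ℝ => u ^ p) (p * u ^ (p - 1)) (Icc x (x + ε)) u :=
    fun u hu => (hasDerivAt_rpow_const (Or.inl (hx.trans_le hu.1).ne')).hasDerivWithinAt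
  have hbound : ∀ u ∈ Icc x (x + ε), ‖p * u ^ (p - 1)‖ ≤ |p| * 2 ^ |p - 1| * x ^ (p - 1) := by
    intro u hu
    rw [norm_mul, norm_of_nonneg (rpow_nonneg (hx.le.trans hu.1) _), mul_assoc]
    exact mul_le_mul_of_nonneg_left
      (rpow_le_two_rpow_abs_mul _ hx hu.1 (by linarith [hu.2])) (abs_nonneg p)
  simpa [abs_of_nonneg hε] using (convex_Icc x (x + ε)).norm_image_sub_le_of_norm_hasDerivWithin_le
    hderiv hbound (left_mem_Icc.2 (by linarith)) (right_mem_Icc.2 (by linarith))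

theorem sq_rpow_div_two {s : ℝ} (hs : 0 ≤ s) (q : ℝ) : (s ^ 2) ^ (q / 2) = s ^ q := by
  rw [rpow_div_two_eq_sqrt q (sq_nonneg s), sqrt_sq hs]

theorem sqrt_inv_rpow {t : ℝ} (ht : 0 ≤ t) (q : ℝ) : √t⁻¹ ^ q = t ^ (-q / 2) := by
  rw [← rpow_div_two_eq_sqrt _ (inv_nonneg.2 ht), inv_rpow ht, ← rpow_neg ht, neg_div]

theorem ofReal_intervalIntegral_eq_lintegral_Ioc {f : ℝ → ℝ} {a b : ℝ} (hab : a ≤ b)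
    (hf : IntervalIntegrable f volume a b) (hnn : ∀ s ∈ Ioc a b, 0 ≤ f s) :
    ENNReal.ofReal (∫ s in a..b, f s) = ∫⁻ s in Ioc a b, ENNReal.ofReal (f s) := by
  rw [intervalIntegral.integral_of_le hab, ofReal_integral_eq_lintegral_ofReal
    ((intervalIntegrable_iff_integrableOn_Ioc_of_le hab).1 hf)
    ((ae_restrict_iff' measurableSet_Ioc).2 (.of_forall hnn))]

noncomputable def gaussianDifference (γ ε s : ℝ) : ℝ :=
  exp (-s ^ 2 / 4) * ((s ^ 2 + ε) ^ (-γ / 2) - s ^ (-γ))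

theorem abs_gaussianDifference_le_of_le {γ σ s : ℝ} (hσ : 0 < σ) (hs : 0 ≤ s) (hsσ : s ≤ σ) :
    |gaussianDifference γ (σ ^ 2) s| ≤ s ^ (-γ) + 2 ^ |γ / 2| * σ ^ (-γ) := by
  have hpos : 0 ≤ (s ^ 2 + σ ^ 2) ^ (-γ / 2) := rpow_nonneg (by positivity) _
  have hnear : (s ^ 2 + σ ^ 2) ^ (-γ / 2) ≤ 2 ^ |γ / 2| * σ ^ (-γ) := by
    rw [← sq_rpow_div_two hσ.le, ← abs_neg, ← neg_div]
    exact rpow_le_two_rpow_abs_mul _ (by positivity) (by nlinarith) (by nlinarith)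
  calc |gaussianDifference γ (σ ^ 2) s|
      ≤ |(s ^ 2 + σ ^ 2) ^ (-γ / 2) - s ^ (-γ)| := by
        rw [gaussianDifference, abs_mul, abs_of_pos (exp_pos _)]
        exact mul_le_of_le_one_left (abs_nonneg _) (exp_le_one_iff.2 (by nlinarith))
    _ ≤ s ^ (-γ) + 2 ^ |γ / 2| * σ ^ (-γ) := by
        rw [abs_sub_le_iff]; constructor <;> nlinarith [rpow_nonneg hs (-γ)]

theorem abs_gaussianDifference_le_of_ge {γ σ s : ℝ} (hσ : 0 < σ) (hσs : σ ≤ s) :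
    |gaussianDifference γ (σ ^ 2) s| ≤
      |γ / 2| * 2 ^ |γ / 2 + 1| * σ ^ 2 * (s ^ (-γ - 2) * exp (-s ^ 2 / 4)) := by
  have hs : 0 < s := hσ.trans_le hσs
  have hmvt := abs_rpow_add_sub_rpow_le (-γ / 2) (pow_pos hs 2) (sq_nonneg σ)
    (pow_le_pow_left₀ hσ.le hσs 2)
  rw [sq_rpow_div_two hs.le, show -γ / 2 - 1 = (-γ - 2) / 2 by ring, sq_rpow_div_two hs.le,
    show |-γ / 2| = |γ / 2| by rw [neg_div, abs_neg],
    show |(-γ - 2) / 2| = |γ / 2 + 1| by rw [← abs_neg]; ring_nf] at hmvt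
  rw [gaussianDifference, abs_mul, abs_of_pos (exp_pos _)]
  calc exp (-s ^ 2 / 4) * |(s ^ 2 + σ ^ 2) ^ (-γ / 2) - s ^ (-γ)|
      ≤ exp (-s ^ 2 / 4) * (|γ / 2| * 2 ^ |γ / 2 + 1| * s ^ (-γ - 2) * σ ^ 2) :=
        mul_le_mul_of_nonneg_left hmvt (exp_pos _).le
    _ = _ := by ring

noncomputable def gaussianTail (p σ : ℝ) : ENNReal :=
  ∫⁻ s in Ioi σ, ENNReal.ofReal (s ^ p * exp (-s ^ 2 / 4))

theorem gaussianTail_le {σ : ℝ} (p : ℝ) (hσ : 0 < σ) (hσ1 : σ ≤ 1) :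
    gaussianTail p σ ≤ ENNReal.ofReal (∫ s in σ..1, s ^ p) + gaussianTail p 1 := by
  rw [gaussianTail, ← Ioc_union_Ioi_eq_Ioi hσ1,
    lintegral_union measurableSet_Ioi Ioc_disjoint_Ioi_same, gaussianTail,
    ofReal_intervalIntegral_eq_lintegral_Ioc hσ1
      (intervalIntegral.intervalIntegrable_rpow (Or.inr (notMem_uIcc_of_lt hσ one_pos)))
      fun s hs => rpow_nonneg (hσ.trans hs.1).le _]
  refine add_le_add_left (setLIntegral_mono' measurableSet_Ioc fun s hs => ?_) _
  exact ENNReal.ofReal_le_ofReal (mul_le_of_le_one_right (rpow_nonneg (hσ.trans hs.1).le _)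
    (exp_le_one_iff.2 (by nlinarith)))

theorem gaussianTail_one_ne_top (p : ℝ) : gaussianTail p 1 ≠ ⊤ := by
  have hmaj : IntegrableOn (fun s : ℝ => s ^ |p| * exp (-s ^ 2 / 4)) (Ioi 1) := by
    have := integrableOn_rpow_mul_exp_neg_mul_sq (b := 1 / 4) (by norm_num)
      (by linarith [abs_nonneg p] : -1 < |p|)
    refine (this.mono_set (Ioi_subset_Ioi zero_le_one)).congr_fun (fun s _ => ?_) measurableSet_Ioi
    ring_nf
  have hint : IntegrableOn (fun s : ℝ => s ^ p * exp (-s ^ 2 / 4)) (Ioi 1) := by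
    refine hmaj.mono' (by fun_prop : Measurable _).aestronglyMeasurable
      ((ae_restrict_iff' measurableSet_Ioi).2 (.of_forall fun s hs => ?_))
    have hs : (1 : ℝ) ≤ s := le_of_lt hs
    rw [norm_of_nonneg (by positivity)]
    exact mul_le_mul_of_nonneg_right (rpow_le_rpow_of_exponent_le hs (le_abs_self p))
      (exp_pos _).le
  rw [gaussianTail, ← ofReal_integral_eq_lintegral_ofReal hint
    ((ae_restrict_iff' measurableSet_Ioi).2 (.of_forall fun s hs => by
      have := (zero_lt_one.trans (mem_Ioi.1 hs)).le; positivity))]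
  exact ENNReal.ofReal_ne_top

section Radial

variable {d γ σ : ℝ}

theorem lintegral_Ioc_rpow_mul_abs_gaussianDifference_le (hd : 0 < d) (hγ : γ < d)
    (hσ : 0 < σ) :
    ∫⁻ s in Ioc 0 σ, ENNReal.ofReal (s ^ (d - 1) * |gaussianDifference γ (σ ^ 2) s|) ≤
      ENNReal.ofReal ((1 / (d - γ) + 2 ^ |γ / 2| / d) * σ ^ (d - γ)) := by
  set K : ℝ := 2 ^ |γ / 2|
  have hint : IntervalIntegrable (fun s => s ^ (d - 1 - γ) + K * σ ^ (-γ) * s ^ (d - 1))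
      volume 0 σ :=
    (intervalIntegral.intervalIntegrable_rpow' (by linarith)).add
      ((intervalIntegral.intervalIntegrable_rpow' (by linarith)).const_mul _)
  calc ∫⁻ s in Ioc 0 σ, ENNReal.ofReal (s ^ (d - 1) * |gaussianDifference γ (σ ^ 2) s|)
      ≤ ∫⁻ s in Ioc 0 σ, ENNReal.ofReal (s ^ (d - 1 - γ) + K * σ ^ (-γ) * s ^ (d - 1)) := by
        refine setLIntegral_mono' measurableSet_Ioc fun s hs => ENNReal.ofReal_le_ofReal ?_
        calc s ^ (d - 1) * |gaussianDifference γ (σ ^ 2) s|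
            ≤ s ^ (d - 1) * (s ^ (-γ) + K * σ ^ (-γ)) :=
              mul_le_mul_of_nonneg_left (abs_gaussianDifference_le_of_le hσ hs.1.le hs.2)
                (rpow_nonneg hs.1.le _)
          _ = s ^ (d - 1 - γ) + K * σ ^ (-γ) * s ^ (d - 1) := by
              rw [sub_eq_add_neg (d - 1), rpow_add hs.1]; ring
    _ = ENNReal.ofReal (∫ s in (0)..σ, s ^ (d - 1 - γ) + K * σ ^ (-γ) * s ^ (d - 1)) :=
        (ofReal_intervalIntegral_eq_lintegral_Ioc hσ.le hint fun s hs => by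
          have := hs.1.le; positivity).symm
    _ = ENNReal.ofReal ((1 / (d - γ) + K / d) * σ ^ (d - γ)) := by
        rw [intervalIntegral.integral_add (intervalIntegral.intervalIntegrable_rpow' (by linarith))
            ((intervalIntegral.intervalIntegrable_rpow' (by linarith)).const_mul _),
          intervalIntegral.integral_const_mul, integral_rpow (Or.inl (by linarith)),
          integral_rpow (Or.inl (by linarith)), sub_add_cancel, sub_right_comm, sub_add_cancel,
          zero_rpow (by linarith), zero_rpow hd.ne', sub_eq_add_neg d γ, rpow_add hσ]
        congr 1
        field_simp
        ring

theorem lintegral_Ioi_rpow_mul_abs_gaussianDifference_le (hσ : 0 < σ) :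
    ∫⁻ s in Ioi σ, ENNReal.ofReal (s ^ (d - 1) * |gaussianDifference γ (σ ^ 2) s|) ≤
      ENNReal.ofReal (|γ / 2| * 2 ^ |γ / 2 + 1| * σ ^ 2) * gaussianTail (d - 3 - γ) σ := by
  rw [gaussianTail, ← lintegral_const_mul' _ _ ENNReal.ofReal_ne_top]
  refine setLIntegral_mono' measurableSet_Ioi fun s hs => ?_
  have hs0 : 0 < s := hσ.trans hs
  rw [← ENNReal.ofReal_mul (by positivity)]
  refine ENNReal.ofReal_le_ofReal ?_
  calc s ^ (d - 1) * |gaussianDifference γ (σ ^ 2) s|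
      ≤ s ^ (d - 1) * (|γ / 2| * 2 ^ |γ / 2 + 1| * σ ^ 2 * (s ^ (-γ - 2) * exp (-s ^ 2 / 4))) :=
        mul_le_mul_of_nonneg_left (abs_gaussianDifference_le_of_ge hσ hs.le)
          (rpow_nonneg hs0.le _)
    _ = |γ / 2| * 2 ^ |γ / 2 + 1| * σ ^ 2 * (s ^ (d - 3 - γ) * exp (-s ^ 2 / 4)) := by
        rw [show d - 3 - γ = d - 1 + (-γ - 2) by ring, rpow_add hs0]; ring

end Radial

section Polar

variable {E : Type*} [NormedAddCommGroup E] [NormedSpace ℝ E] [MeasurableSpace E] [BorelSpace E]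
  [Nontrivial E] [FiniteDimensional ℝ E] (μ : Measure E) [μ.IsAddHaarMeasure]

theorem lintegral_fun_norm_addHaar {f : ℝ → ENNReal} (hf : Measurable f) :
    ∫⁻ x, f ‖x‖ ∂μ = Module.finrank ℝ E * μ (ball 0 1) *
      ∫⁻ y in Ioi (0 : ℝ), ENNReal.ofReal (y ^ (Module.finrank ℝ E - 1)) * f y := by
  set k := Module.finrank ℝ E - 1
  have hg : Measurable fun y : Ioi (0 : ℝ) => f y := hf.comp measurable_subtype_coe
  calc ∫⁻ x, f ‖x‖ ∂μ = ∫⁻ x : ({0}ᶜ : Set E), f ‖x.1‖ ∂(μ.comap (↑)) := by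
        rw [lintegral_subtype_comap (measurableSet_singleton _).compl fun x => f ‖x‖,
          restrict_compl_singleton]
    _ = ∫⁻ p : sphere (0 : E) 1 × Ioi (0 : ℝ), f p.2 ∂(μ.toSphere.prod (.volumeIoiPow k)) := by
        rw [← μ.measurePreserving_homeomorphUnitSphereProd.lintegral_comp_emb
          (Homeomorph.measurableEmbedding _) (fun p => f p.2)]
        simp
    _ = μ.toSphere univ * ∫⁻ y : Ioi (0 : ℝ), f y ∂(.volumeIoiPow k) := by
        rw [lintegral_prod (fun p : sphere (0 : E) 1 × Ioi (0 : ℝ) => f p.2)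
          (hg.comp measurable_snd).aemeasurable]
        simp [lintegral_const, mul_comm]
    _ = _ := by
        rw [Measure.toSphere_apply_univ, Measure.volumeIoiPow,
          lintegral_withDensity_eq_lintegral_mul _ (by fun_prop) hg,
          ← lintegral_subtype_comap measurableSet_Ioi]
        rfl

theorem ofReal_abs_integral_gaussianDifference_le {γ σ : ℝ} (hγ : γ < Module.finrank ℝ E)
    (hσ : 0 < σ) :
    ENNReal.ofReal |∫ x, gaussianDifference γ (σ ^ 2) ‖x‖ ∂μ| ≤
      Module.finrank ℝ E * μ (ball 0 1) *
        (ENNReal.ofReal ((1 / (Module.finrank ℝ E - γ) + 2 ^ |γ / 2| / Module.finrank ℝ E) *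
            σ ^ ((Module.finrank ℝ E : ℝ) - γ)) +
          ENNReal.ofReal (|γ / 2| * 2 ^ |γ / 2 + 1| * σ ^ 2) *
            gaussianTail ((Module.finrank ℝ E : ℝ) - 3 - γ) σ) := by
  set k := Module.finrank ℝ E
  have hk : 0 < k := Module.finrank_pos
  calc ENNReal.ofReal |∫ x, gaussianDifference γ (σ ^ 2) ‖x‖ ∂μ|
      ≤ ∫⁻ x, ENNReal.ofReal |gaussianDifference γ (σ ^ 2) ‖x‖| ∂μ := by
        simpa only [Real.enorm_eq_ofReal_abs] using
          enorm_integral_le_lintegral_enorm (μ := μ) fun x => gaussianDifference γ (σ ^ 2) ‖x‖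
    _ = k * μ (ball 0 1) * ∫⁻ s in Ioi 0,
          ENNReal.ofReal (s ^ ((k : ℝ) - 1) * |gaussianDifference γ (σ ^ 2) s|) := by
        rw [lintegral_fun_norm_addHaar μ
          (f := fun s => ENNReal.ofReal |gaussianDifference γ (σ ^ 2) s|)
          (by unfold gaussianDifference; fun_prop)]
        congr 1
        refine setLIntegral_congr_fun measurableSet_Ioi fun s hs => ?_
        rw [← ENNReal.ofReal_mul (pow_nonneg (le_of_lt hs) _), ← rpow_natCast,
          Nat.cast_sub hk, Nat.cast_one]
    _ = k * μ (ball 0 1) *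
          ((∫⁻ s in Ioc 0 σ,
              ENNReal.ofReal (s ^ ((k : ℝ) - 1) * |gaussianDifference γ (σ ^ 2) s|)) +
            ∫⁻ s in Ioi σ,
              ENNReal.ofReal (s ^ ((k : ℝ) - 1) * |gaussianDifference γ (σ ^ 2) s|)) := by
        rw [← Ioc_union_Ioi_eq_Ioi hσ.le, lintegral_union measurableSet_Ioi Ioc_disjoint_Ioi_same]
    _ ≤ _ := by
        gcongr
        · exact lintegral_Ioc_rpow_mul_abs_gaussianDifference_le (by exact_mod_cast hk) hγ hσ
        · exact lintegral_Ioi_rpow_mul_abs_gaussianDifference_le hσ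

theorem exists_abs_integral_gaussianDifference_le {γ : ℝ} (hγ : γ < Module.finrank ℝ E) :
    ∃ C₁ ≥ (0 : ℝ), ∃ C₂ ≥ (0 : ℝ), ∃ D ≥ (0 : ℝ), ∀ σ, 0 < σ → σ ≤ 1 →
      |∫ x, gaussianDifference γ (σ ^ 2) ‖x‖ ∂μ| ≤
        C₁ * σ ^ ((Module.finrank ℝ E : ℝ) - γ) +
          C₂ * σ ^ 2 * ((∫ s in σ..1, s ^ ((Module.finrank ℝ E : ℝ) - 3 - γ)) + D) := by
  set k : ℝ := (Module.finrank ℝ E : ℝ)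
  set V := μ.real (ball 0 1)
  set D := (gaussianTail (k - 3 - γ) 1).toReal
  have hk : 0 < k := Nat.cast_pos.2 Module.finrank_pos
  refine ⟨k * V * (1 / (k - γ) + 2 ^ |γ / 2| / k), by positivity,
    k * V * (|γ / 2| * 2 ^ |γ / 2 + 1|), by positivity, D, ENNReal.toReal_nonneg,
    fun σ hσ hσ1 => ?_⟩
  have hP : 0 ≤ ∫ s in σ..1, s ^ (k - 3 - γ) :=
    intervalIntegral.integral_nonneg hσ1 fun s hs => rpow_nonneg (hσ.le.trans hs.1) _
  rw [← ENNReal.ofReal_le_ofReal_iff (by positivity)]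
  calc ENNReal.ofReal |∫ x, gaussianDifference γ (σ ^ 2) ‖x‖ ∂μ|
      ≤ ENNReal.ofReal (k * V) * (ENNReal.ofReal ((1 / (k - γ) + 2 ^ |γ / 2| / k) * σ ^ (k - γ)) +
          ENNReal.ofReal (|γ / 2| * 2 ^ |γ / 2 + 1| * σ ^ 2) * gaussianTail (k - 3 - γ) σ) := by
        rw [ENNReal.ofReal_mul hk.le, ENNReal.ofReal_natCast,
          ofReal_measureReal measure_ball_lt_top.ne]
        exact ofReal_abs_integral_gaussianDifference_le μ hγ hσ
    _ ≤ ENNReal.ofReal (k * V) * (ENNReal.ofReal ((1 / (k - γ) + 2 ^ |γ / 2| / k) * σ ^ (k - γ)) +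
          ENNReal.ofReal (|γ / 2| * 2 ^ |γ / 2 + 1| * σ ^ 2) *
            ENNReal.ofReal ((∫ s in σ..1, s ^ (k - 3 - γ)) + D)) := by
        rw [ENNReal.ofReal_add hP ENNReal.toReal_nonneg,
          ENNReal.ofReal_toReal (gaussianTail_one_ne_top _)]
        gcongr
        exact gaussianTail_le _ hσ hσ1
    _ = _ := by
        rw [← ENNReal.ofReal_mul (by positivity),
          ← ENNReal.ofReal_add (by positivity) (by positivity),
          ← ENNReal.ofReal_mul (by positivity)]
        congr 1
        ring

end Polar

noncomputable def remainderRate (d γ t : ℝ) : ℝ :=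
  if γ < d - 2 then t⁻¹ else if γ = d - 2 then t⁻¹ * (1 + log t) else t ^ ((γ - d) / 2)

section Rate

variable {d γ t : ℝ}

theorem inv_le_remainderRate (ht : 1 ≤ t) : t⁻¹ ≤ remainderRate d γ t := by
  unfold remainderRate
  split_ifs with h₁ h₂
  · rfl
  · exact le_mul_of_one_le_right (inv_nonneg.2 (by linarith)) (by linarith [log_nonneg ht])
  · rw [← rpow_neg_one]
    exact rpow_le_rpow_of_exponent_le ht (by linarith [not_lt.1 h₁])

theorem integral_sqrt_inv_rpow_sub_one {a : ℝ} (ht : 1 ≤ t) (ha : a ≠ 0) :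
    ∫ s in √t⁻¹..1, s ^ (a - 1) = (1 - t ^ (-a / 2)) / a := by
  have hσ : 0 < √t⁻¹ := sqrt_pos.2 (inv_pos.2 (by linarith))
  have hσ1 : √t⁻¹ ≤ 1 := sqrt_le_one.2 (inv_le_one_of_one_le₀ ht)
  rw [integral_rpow (Or.inr ⟨by contrapose! ha; linarith, notMem_uIcc_of_lt hσ one_pos⟩),
    sub_add_cancel, one_rpow, sqrt_inv_rpow (by linarith)]

theorem exists_inv_mul_integral_rpow_le_remainderRate (d γ : ℝ) :
    ∃ C > 0, ∀ t ≥ (1 : ℝ),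
      t⁻¹ * ∫ s in √t⁻¹..1, s ^ (d - 3 - γ) ≤ C * remainderRate d γ t := by
  have hp : d - 3 - γ = d - 2 - γ - 1 := by ring
  rcases lt_trichotomy γ (d - 2) with h | h | h
  · refine ⟨1 / (d - 2 - γ), by simp only [one_div, inv_pos]; linarith, fun t ht => ?_⟩
    have ht0 : 0 < t := by linarith
    rw [remainderRate, if_pos h, hp, integral_sqrt_inv_rpow_sub_one ht (by linarith)]
    have ha : 0 < d - 2 - γ := by linarith
    calc t⁻¹ * ((1 - t ^ (-(d - 2 - γ) / 2)) / (d - 2 - γ)) ≤ t⁻¹ * (1 / (d - 2 - γ)) := by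
          gcongr
          linarith [rpow_nonneg ht0.le (-(d - 2 - γ) / 2)]
      _ = 1 / (d - 2 - γ) * t⁻¹ := mul_comm _ _
  · refine ⟨1, one_pos, fun t ht => ?_⟩
    have ht0 : 0 < t := by linarith
    have hσ : 0 < √t⁻¹ := sqrt_pos.2 (inv_pos.2 ht0)
    rw [remainderRate, if_neg h.not_lt, if_pos h, show d - 3 - γ = -1 by rw [h]; ring,
      intervalIntegral.integral_congr fun s _ => rpow_neg_one s,
      integral_inv (notMem_uIcc_of_lt hσ one_pos), one_div, sqrt_inv, inv_inv,
      log_sqrt ht0.le, one_mul]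
    gcongr
    linarith [log_nonneg ht]
  · refine ⟨1 / (γ + 2 - d), by simp only [one_div, inv_pos]; linarith, fun t ht => ?_⟩
    have ht0 : 0 < t := by linarith
    rw [remainderRate, if_neg (by linarith), if_neg h.ne', hp,
      integral_sqrt_inv_rpow_sub_one ht (by linarith)]
    set X := t ^ (-(d - 2 - γ) / 2)
    have hflip : (1 - X) / (d - 2 - γ) = (X - 1) / (γ + 2 - d) := by
      rw [div_eq_div_iff (by linarith) (by linarith)]; ring
    have hX : t⁻¹ * X = t ^ ((γ - d) / 2) := by
      rw [← rpow_neg_one, ← rpow_add ht0]; ring_nf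
    calc t⁻¹ * ((1 - X) / (d - 2 - γ)) = 1 / (γ + 2 - d) * (t⁻¹ * X - t⁻¹) := by
          rw [hflip]; ring
      _ ≤ 1 / (γ + 2 - d) * (t⁻¹ * X) := by
          have : 0 < γ + 2 - d := by linarith
          gcongr
          linarith [inv_pos.2 ht0]
      _ = 1 / (γ + 2 - d) * t ^ ((γ - d) / 2) := by rw [hX]

end Rate

theorem gaussian_difference_estimate (n : ℕ) (hn : 0 < n) (γ : ℝ) (hγ : γ < n) :
    ∃ C > 0, ∀ t ≥ (1 : ℝ),
      |∫ z : EuclideanSpace ℝ (Fin n),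
          Real.exp (-‖z‖ ^ 2 / 4) * ((‖z‖ ^ 2 + t⁻¹) ^ (-γ / 2) - ‖z‖ ^ (-γ))|
      ≤ C * (t ^ ((γ - (n : ℝ)) / 2) +
          (if γ < (n : ℝ) - 2 then t⁻¹
            else if γ = (n : ℝ) - 2 then t⁻¹ * (1 + Real.log t)
            else t ^ ((γ - (n : ℝ)) / 2))) := by
  have : Nonempty (Fin n) := ⟨⟨0, hn⟩⟩
  obtain ⟨C₁, hC₁, C₂, hC₂, D, hD, hI⟩ := exists_abs_integral_gaussianDifference_le
    (volume : Measure (EuclideanSpace ℝ (Fin n))) (γ := γ) (by rwa [finrank_euclideanSpace_fin])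
  obtain ⟨C₃, hC₃, hrate⟩ := exists_inv_mul_integral_rpow_le_remainderRate n γ
  refine ⟨C₁ + C₂ * (C₃ + D) + 1, by positivity, fun t ht => ?_⟩
  have ht0 : 0 < t := by linarith
  have hI := hI √t⁻¹ (sqrt_pos.2 (inv_pos.2 ht0)) (sqrt_le_one.2 (inv_le_one_of_one_le₀ ht))
  rw [finrank_euclideanSpace_fin, sq_sqrt (inv_nonneg.2 ht0.le), sqrt_inv_rpow ht0.le,
    neg_sub] at hI
  have hA : 0 ≤ t ^ ((γ - n) / 2) := rpow_nonneg ht0.le _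
  have hr := inv_le_remainderRate (d := n) (γ := γ) ht
  have hP := hrate t ht
  have hr₀ : 0 ≤ remainderRate n γ t := (inv_pos.2 ht0).le.trans hr
  calc _ ≤ C₁ * t ^ ((γ - n) / 2) +
        C₂ * (t⁻¹ * ∫ s in √t⁻¹..1, s ^ ((n : ℝ) - 3 - γ)) + C₂ * D * t⁻¹ :=
          hI.trans_eq (by ring)
    _ ≤ C₁ * t ^ ((γ - n) / 2) + C₂ * (C₃ * remainderRate n γ t) +
        C₂ * D * remainderRate n γ t := by gcongr
    _ ≤ (C₁ + C₂ * (C₃ + D) + 1) * (t ^ ((γ - n) / 2) + remainderRate n γ t) := by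
        nlinarith [mul_nonneg hC₁ hr₀, mul_nonneg (mul_nonneg hC₂ (add_nonneg hC₃.le hD)) hA]
end

section
/- For n > 0 and t ≥ 1, the integral (4πt)^(-n/2) ∫_{|y| ≥ √t} e^(-|y|²/(4t)) ⟨y⟩^(-n) dy is comparable to t^(-n/2); that is, there exist constants c, C > 0 depending only on n such that c t^(-n/2) ≤ (4πt)^(-n/2) ∫_{|y| ≥ √t} e^(-|y|²/(4t)) ⟨y⟩^(-n) dy ≤ C t^(-n/2) for all t ≥ 1. -/
open MeasureTheory Real

/-! On `√t ≤ ‖y‖` the weight `⟨y⟩^(-s)` is at most `t^(-s/2)`, while the Gaussian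
`exp (-‖y‖²/(4t))` has total mass `(4πt)^(d/2)`; this gives the upper bound. For the lower bound,
the ball of radius `√t/2` around a point of norm `3√t/2` lies in the annulus `√t ≤ ‖y‖ ≤ 2√t`,
where the Gaussian is at least `e⁻¹` and `⟨y⟩^(-s) ≥ (5t)^(-s/2)` once `t ≥ 1`; the ball has
volume `(t/4)^(d/2)` times that of the unit ball. -/

open Metric Module

theorem sqrt_one_add_sq_rpow_neg_le_one_s8 (x : ℝ) {s : ℝ} (hs : 0 ≤ s) :
    √(1 + x ^ 2) ^ (-s) ≤ 1 :=
  rpow_le_one_of_one_le_of_nonpos (one_le_sqrt.mpr (by nlinarith)) (neg_nonpos.mpr hs)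

theorem sqrt_one_add_sq_rpow_neg_le {r x s : ℝ} (hr : 0 < r) (hrx : r ≤ x) (hs : 0 ≤ s) :
    √(1 + x ^ 2) ^ (-s) ≤ r ^ (-s) :=
  rpow_le_rpow_of_nonpos hr (hrx.trans ((le_sqrt' (hr.trans_le hrx)).mpr (by linarith)))
    (neg_nonpos.mpr hs)

theorem rpow_neg_div_two_le_sqrt_one_add_sq_rpow_neg {a x s : ℝ} (hxa : 1 + x ^ 2 ≤ a)
    (hs : 0 ≤ s) : a ^ (-s / 2) ≤ √(1 + x ^ 2) ^ (-s) := by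
  rw [rpow_div_two_eq_sqrt _ (by nlinarith)]
  exact rpow_le_rpow_of_nonpos (by positivity) (sqrt_le_sqrt hxa) (neg_nonpos.mpr hs)

section OuterRegion

variable {E : Type*} [NormedAddCommGroup E] [InnerProductSpace ℝ E] [FiniteDimensional ℝ E]
  [MeasurableSpace E] [BorelSpace E]

theorem integral_exp_neg_sq_norm_div {t : ℝ} (ht : 0 < t) :
    ∫ y : E, rexp (-‖y‖ ^ 2 / (4 * t)) = (4 * π * t) ^ (finrank ℝ E / 2 : ℝ) := by
  have hb : 0 < 1 / (4 * t) := by positivity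
  calc ∫ y : E, rexp (-‖y‖ ^ 2 / (4 * t)) = ∫ y : E, rexp (-(1 / (4 * t)) * ‖y‖ ^ 2) := by
        congr with y; ring_nf
    _ = (4 * π * t) ^ (finrank ℝ E / 2 : ℝ) := by
        rw [GaussianFourier.integral_rexp_neg_mul_sq_norm hb]
        congr 1; field_simp

theorem integrable_exp_neg_sq_norm_div {t : ℝ} (ht : 0 < t) :
    Integrable fun y : E => rexp (-‖y‖ ^ 2 / (4 * t)) :=
  .of_integral_ne_zero (by rw [integral_exp_neg_sq_norm_div ht]; positivity)

theorem integrable_exp_neg_sq_norm_div_mul_sqrt_rpow {t s : ℝ} (ht : 0 < t) (hs : 0 ≤ s) :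
    Integrable fun y : E => rexp (-‖y‖ ^ 2 / (4 * t)) * √(1 + ‖y‖ ^ 2) ^ (-s) := by
  refine (integrable_exp_neg_sq_norm_div ht).mono' (by fun_prop) (.of_forall fun y => ?_)
  rw [Real.norm_of_nonneg (by positivity)]
  exact mul_le_of_le_one_right (exp_pos _).le (sqrt_one_add_sq_rpow_neg_le_one_s8 _ hs)

theorem exp_neg_one_mul_rpow_le {t s x : ℝ} (ht : 1 ≤ t) (hs : 0 ≤ s) (hx0 : 0 ≤ x)
    (hx : x ≤ 2 * √t) :
    rexp (-1) * (5 * t) ^ (-s / 2) ≤ rexp (-x ^ 2 / (4 * t)) * √(1 + x ^ 2) ^ (-s) := by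
  have hx2 : x ^ 2 ≤ 4 * t := by nlinarith [sq_sqrt (zero_le_one.trans ht)]
  gcongr
  · rw [neg_div, neg_le_neg_iff, div_le_one (by positivity)]
    exact hx2
  · exact rpow_neg_div_two_le_sqrt_one_add_sq_rpow_neg (by linarith) hs

theorem setIntegral_outer_le {t s : ℝ} (ht : 0 < t) (hs : 0 ≤ s) :
    ∫ y in {y : E | √t ≤ ‖y‖}, rexp (-‖y‖ ^ 2 / (4 * t)) * √(1 + ‖y‖ ^ 2) ^ (-s)
      ≤ t ^ (-s / 2) * (4 * π * t) ^ (finrank ℝ E / 2 : ℝ) := by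
  have hS : MeasurableSet {y : E | √t ≤ ‖y‖} := measurableSet_le measurable_const measurable_norm
  have hG := integrable_exp_neg_sq_norm_div (E := E) ht
  calc ∫ y in {y : E | √t ≤ ‖y‖}, rexp (-‖y‖ ^ 2 / (4 * t)) * √(1 + ‖y‖ ^ 2) ^ (-s)
      ≤ ∫ y in {y : E | √t ≤ ‖y‖}, t ^ (-s / 2) * rexp (-‖y‖ ^ 2 / (4 * t)) := by
        refine setIntegral_mono_on
          (integrable_exp_neg_sq_norm_div_mul_sqrt_rpow ht hs).integrableOn
          (hG.const_mul _).integrableOn hS fun y hy => ?_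
        rw [mul_comm, rpow_div_two_eq_sqrt _ ht.le]
        exact mul_le_mul_of_nonneg_right (sqrt_one_add_sq_rpow_neg_le (sqrt_pos.mpr ht) hy hs)
          (exp_pos _).le
    _ ≤ ∫ y, t ^ (-s / 2) * rexp (-‖y‖ ^ 2 / (4 * t)) :=
        setIntegral_le_integral (hG.const_mul _) (.of_forall fun y => by positivity)
    _ = t ^ (-s / 2) * (4 * π * t) ^ (finrank ℝ E / 2 : ℝ) := by
        rw [integral_const_mul, integral_exp_neg_sq_norm_div ht]

theorem rpow_mul_setIntegral_outer_le {t s : ℝ} (ht : 0 < t) (hs : 0 ≤ s) :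
    (4 * π * t) ^ (-(finrank ℝ E : ℝ) / 2) *
        ∫ y in {y : E | √t ≤ ‖y‖}, rexp (-‖y‖ ^ 2 / (4 * t)) * √(1 + ‖y‖ ^ 2) ^ (-s)
      ≤ t ^ (-s / 2) :=
  calc _ ≤ (4 * π * t) ^ (-(finrank ℝ E : ℝ) / 2) *
        (t ^ (-s / 2) * (4 * π * t) ^ (finrank ℝ E / 2 : ℝ)) := by
        gcongr; exact setIntegral_outer_le ht hs
    _ = t ^ (-s / 2) := by
        rw [mul_left_comm, ← rpow_add (by positivity),
          show -(finrank ℝ E : ℝ) / 2 + finrank ℝ E / 2 = 0 by ring, rpow_zero, mul_one]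

theorem le_setIntegral_outer [Nontrivial E] {t s : ℝ} (ht : 1 ≤ t) (hs : 0 ≤ s) :
    rexp (-1) * (5 * t) ^ (-s / 2) *
        ((t / 4) ^ (finrank ℝ E / 2 : ℝ) * volume.real (ball (0 : E) 1))
      ≤ ∫ y in {y : E | √t ≤ ‖y‖}, rexp (-‖y‖ ^ 2 / (4 * t)) * √(1 + ‖y‖ ^ 2) ^ (-s) := by
  have ht0 : 0 < t := zero_lt_one.trans_le ht
  have hf := integrable_exp_neg_sq_norm_div_mul_sqrt_rpow (E := E) ht0 hs
  obtain ⟨y₀, hy₀⟩ := exists_norm_eq E (by positivity : 0 ≤ 3 / 2 * √t)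
  have hball : ∀ y ∈ closedBall y₀ (√t / 2), √t ≤ ‖y‖ ∧ ‖y‖ ≤ 2 * √t := by
    intro y hy
    rw [mem_closedBall, dist_eq_norm] at hy
    have := abs_le.mp ((abs_norm_sub_norm_le y y₀).trans hy)
    constructor <;> linarith
  have hvol : volume.real (closedBall y₀ (√t / 2))
      = (t / 4) ^ (finrank ℝ E / 2 : ℝ) * volume.real (ball (0 : E) 1) := by
    rw [Measure.addHaar_real_closedBall _ _ (by positivity),
      rpow_div_two_eq_sqrt _ (by positivity), sqrt_div' _ (by norm_num),
      show (4 : ℝ) = 2 ^ 2 by norm_num, sqrt_sq (by norm_num),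
      rpow_natCast]
  calc _ = rexp (-1) * (5 * t) ^ (-s / 2) * volume.real (closedBall y₀ (√t / 2)) := by rw [hvol]
    _ ≤ ∫ y in closedBall y₀ (√t / 2), rexp (-‖y‖ ^ 2 / (4 * t)) * √(1 + ‖y‖ ^ 2) ^ (-s) :=
        setIntegral_ge_of_const_le_real measurableSet_closedBall measure_closedBall_lt_top.ne
          (fun y hy => exp_neg_one_mul_rpow_le ht hs (norm_nonneg y) (hball y hy).2)
          hf.integrableOn
    _ ≤ _ := setIntegral_mono_set hf.integrableOn (.of_forall fun y => by positivity)
        (LE.le.eventuallyLE fun y hy => (hball y hy).1)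

theorem le_rpow_mul_setIntegral_outer [Nontrivial E] {t s : ℝ} (ht : 1 ≤ t) (hs : 0 ≤ s) :
    rexp (-1) * (16 * π) ^ (-(finrank ℝ E : ℝ) / 2) * 5 ^ (-s / 2) * volume.real (ball (0 : E) 1)
        * t ^ (-s / 2)
      ≤ (4 * π * t) ^ (-(finrank ℝ E : ℝ) / 2) *
        ∫ y in {y : E | √t ≤ ‖y‖}, rexp (-‖y‖ ^ 2 / (4 * t)) * √(1 + ‖y‖ ^ 2) ^ (-s) := by
  have ht0 : 0 < t := zero_lt_one.trans_le ht
  have hratio : (4 * π * t) ^ (-(finrank ℝ E : ℝ) / 2) * (t / 4) ^ (finrank ℝ E / 2 : ℝ)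
      = (16 * π) ^ (-(finrank ℝ E : ℝ) / 2) := by
    rw [neg_div, rpow_neg (by positivity), rpow_neg (by positivity), ← div_eq_inv_mul,
      ← div_rpow (by positivity) (by positivity), ← inv_rpow (by positivity)]
    congr 1; field_simp; ring
  calc _ = (4 * π * t) ^ (-(finrank ℝ E : ℝ) / 2) * (rexp (-1) * (5 * t) ^ (-s / 2) *
        ((t / 4) ^ (finrank ℝ E / 2 : ℝ) * volume.real (ball (0 : E) 1))) := by
        rw [mul_rpow (x := 5) (by norm_num) ht0.le]
        linear_combination (rexp (-1) * 5 ^ (-s / 2) * volume.real (ball (0 : E) 1)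
          * t ^ (-s / 2)) * hratio.symm
    _ ≤ _ := by gcongr; exact le_setIntegral_outer ht hs

end OuterRegion

theorem outer_region_comparable (n : ℕ) (hn : 0 < n) :
    ∃ c C : ℝ, 0 < c ∧ 0 < C ∧ ∀ t ≥ (1 : ℝ),
      c * t ^ (-(n : ℝ) / 2)
        ≤ (4 * π * t) ^ (-(n : ℝ) / 2)
          * (∫ y in {y : EuclideanSpace ℝ (Fin n) | Real.sqrt t ≤ ‖y‖},
              Real.exp (-‖y‖ ^ 2 / (4 * t)) * Real.sqrt (1 + ‖y‖ ^ 2) ^ (-(n : ℝ)))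
      ∧ (4 * π * t) ^ (-(n : ℝ) / 2)
          * (∫ y in {y : EuclideanSpace ℝ (Fin n) | Real.sqrt t ≤ ‖y‖},
              Real.exp (-‖y‖ ^ 2 / (4 * t)) * Real.sqrt (1 + ‖y‖ ^ 2) ^ (-(n : ℝ)))
        ≤ C * t ^ (-(n : ℝ) / 2) := by
  have : Nonempty (Fin n) := ⟨⟨0, hn⟩⟩
  have hd : (finrank ℝ (EuclideanSpace ℝ (Fin n)) : ℝ) = n := by
    rw [finrank_euclideanSpace_fin]
  have hv : 0 < volume.real (ball (0 : EuclideanSpace ℝ (Fin n)) 1) :=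
    ENNReal.toReal_pos (Metric.measure_ball_pos volume 0 one_pos).ne' measure_ball_lt_top.ne
  refine ⟨rexp (-1) * (16 * π) ^ (-(n : ℝ) / 2) * 5 ^ (-(n : ℝ) / 2) *
      volume.real (ball (0 : EuclideanSpace ℝ (Fin n)) 1), 1, by positivity, one_pos,
    fun t ht => ⟨?_, ?_⟩⟩
  · have := le_rpow_mul_setIntegral_outer (E := EuclideanSpace ℝ (Fin n)) ht n.cast_nonneg
    rwa [hd] at this
  · have := rpow_mul_setIntegral_outer_le (E := EuclideanSpace ℝ (Fin n))
      (zero_lt_one.trans_le ht) n.cast_nonneg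
    rwa [hd, ← one_mul (t ^ _)] at this
end

section
/- Let n > 0, A > 0, and b ∈ ℝ. There exists C > 0 such that for all x ∈ ℝⁿ, | ∫_{ℝⁿ} e^(-A|x−y|²) ⟨y⟩^(-b) dy − ⟨x⟩^(-b) ∫_{ℝⁿ} e^(-A|z|²) dz | ≤ C ( |x| ⟨x⟩^(-b-2) ( |x|^{n+1} 1_{|x|≤1} + 1_{|x|>1} ) + ∫_{|z| > |x|/2} e^(-A|z|²) (|z| + ⟨x⟩)^{max{0,−b}} dz ). -/
/-!
Substituting `y = x - z`, the difference is `∫ e^{-A|z|²} (⟨x - z⟩^{-b} - ⟨x⟩^{-b}) dz`.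
On the ball `|z| ≤ |x|/2`, `⟨x - z⟩²` stays within a factor `4` of `⟨x⟩²` and differs from it
by `O(|x| |z|)`, so the mean value theorem for `u ↦ u^{-b/2}` bounds the integrand by
`|x| |z| ⟨x⟩^{-b-2} e^{-A|z|²}`; the integral of `|z| e^{-A|z|²}` over that ball is
`O(|x|^{n+1})` for small `x` and `O(1)` always. Off the ball, `⟨x - z⟩ ≤ |z| + ⟨x⟩` bounds both
terms of the integrand by `(|z| + ⟨x⟩)^{max(0, -b)}`.
-/

open MeasureTheory Real Metric Set Module

lemma abs_rpow_sub_rpow_le_of_mem_Icc (p : ℝ) {c d t s : ℝ} (hc : 0 < c) (ht : 0 < t)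
    (hc₁ : c ≤ 1) (hd₁ : 1 ≤ d) (hs : s ∈ Icc (c * t) (d * t)) :
    |s ^ p - t ^ p| ≤ |p| * max (c ^ (p - 1)) (d ^ (p - 1)) * t ^ (p - 1) * |s - t| := by
  have hct : 0 < c * t := mul_pos hc ht
  have hderiv : ∀ u ∈ Icc (c * t) (d * t),
      HasDerivWithinAt (fun u : ℝ => u ^ p) (p * u ^ (p - 1)) (Icc (c * t) (d * t)) u :=
    fun u hu => (hasDerivAt_rpow_const (Or.inl (hct.trans_le hu.1).ne')).hasDerivWithinAt
  have hbound : ∀ u ∈ Icc (c * t) (d * t),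
      ‖p * u ^ (p - 1)‖ ≤ |p| * max (c ^ (p - 1)) (d ^ (p - 1)) * t ^ (p - 1) := by
    intro u hu
    have hu₀ : 0 < u := hct.trans_le hu.1
    rw [norm_mul, norm_eq_abs, norm_of_nonneg (rpow_nonneg hu₀.le _), mul_assoc,
      max_mul_of_nonneg _ _ (rpow_nonneg ht.le _), ← mul_rpow hc.le ht.le,
      ← mul_rpow (by linarith) ht.le]
    gcongr
    rcases le_total 0 (p - 1) with hq | hq
    · exact le_max_of_le_right (rpow_le_rpow hu₀.le hu.2 hq)
    · exact le_max_of_le_left (rpow_le_rpow_of_nonpos hct hu.1 hq)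
  have ht_mem : t ∈ Icc (c * t) (d * t) := ⟨by nlinarith, by nlinarith⟩
  simpa only [norm_eq_abs] using
    (convex_Icc _ _).norm_image_sub_le_of_norm_hasDerivWithin_le hderiv hbound ht_mem hs

lemma add_rpow_le_mul_exp_mul_sq {a c p t : ℝ} (ha : 0 < a) (hc : 0 ≤ c) (hp : 0 ≤ p)
    (ht : 0 ≤ t) :
    (t + c) ^ p ≤ (1 + c) ^ p * exp (p ^ 2 / (2 * a)) * exp (a / 2 * t ^ 2) := by
  have hbase : t + c ≤ (1 + c) * exp t := by nlinarith [add_one_le_exp t]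
  have hamgm : p * t ≤ p ^ 2 / (2 * a) + a / 2 * t ^ 2 := by
    have : p ^ 2 / (2 * a) + a / 2 * t ^ 2 - p * t = (p - a * t) ^ 2 / (2 * a) := by
      field_simp; ring
    nlinarith [show 0 ≤ (p - a * t) ^ 2 / (2 * a) by positivity]
  calc (t + c) ^ p ≤ ((1 + c) * exp t) ^ p := rpow_le_rpow (by positivity) hbase hp
    _ = (1 + c) ^ p * exp (p * t) := by
      rw [mul_rpow (by positivity) (exp_pos t).le, ← exp_mul, mul_comm t]
    _ ≤ (1 + c) ^ p * exp (p ^ 2 / (2 * a) + a / 2 * t ^ 2) := by gcongr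
    _ = (1 + c) ^ p * exp (p ^ 2 / (2 * a)) * exp (a / 2 * t ^ 2) := by
      rw [exp_add, mul_assoc]

lemma rpow_neg_le_rpow_max_zero_neg (b : ℝ) {u v : ℝ} (hu : 1 ≤ u) (huv : u ≤ v) :
    u ^ (-b) ≤ v ^ max 0 (-b) := by
  rcases le_total 0 b with hb | hb
  · rw [max_eq_left (by linarith), rpow_zero]
    exact rpow_le_one_of_one_le_of_nonpos hu (by linarith)
  · rw [max_eq_right (by linarith)]
    exact rpow_le_rpow (by linarith) huv (by linarith)

lemma abs_integral_le_setIntegral_add_setIntegral_compl {α : Type*} [MeasurableSpace α]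
    {μ : Measure α} {f g h : α → ℝ} {s : Set α} (hs : MeasurableSet s) (hf : Integrable f μ)
    (hg : IntegrableOn g s μ) (hh : IntegrableOn h sᶜ μ) (hfg : ∀ x ∈ s, |f x| ≤ g x)
    (hfh : ∀ x ∈ sᶜ, |f x| ≤ h x) :
    |∫ x, f x ∂μ| ≤ (∫ x in s, g x ∂μ) + ∫ x in sᶜ, h x ∂μ :=
  calc |∫ x, f x ∂μ| ≤ ∫ x, |f x| ∂μ := abs_integral_le_integral_abs
    _ = (∫ x in s, |f x| ∂μ) + ∫ x in sᶜ, |f x| ∂μ := (integral_add_compl hs hf.abs).symm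
    _ ≤ (∫ x in s, g x ∂μ) + ∫ x in sᶜ, h x ∂μ :=
      add_le_add (setIntegral_mono_on hf.abs.integrableOn hg hs hfg)
        (setIntegral_mono_on hf.abs.integrableOn hh hs.compl hfh)

lemma integral_mul_sub_mul_integral_eq {G : Type*} [MeasurableSpace G] [AddCommGroup G]
    [MeasurableAdd G] [MeasurableNeg G] {μ : Measure G} [μ.IsNegInvariant]
    [μ.IsAddLeftInvariant] {k g : G → ℝ} (x : G) (hk : Integrable k μ)
    (hkg : Integrable (fun z => k z * g (x - z)) μ) :
    (∫ y, k (x - y) * g y ∂μ) - g x * ∫ z, k z ∂μ = ∫ z, k z * (g (x - z) - g x) ∂μ := by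
  rw [← integral_sub_left_eq_self (fun y => k (x - y) * g y) μ x, ← integral_const_mul]
  simp only [sub_sub_cancel]
  rw [← integral_sub hkg (hk.const_mul _)]
  simp only [mul_sub, mul_comm (g x)]

section JapaneseBracket

variable {E : Type*} [SeminormedAddCommGroup E]

lemma sqrt_one_add_sq_norm_sub_le (x z : E) :
    √(1 + ‖x - z‖ ^ 2) ≤ ‖z‖ + √(1 + ‖x‖ ^ 2) := by
  have hx : ‖x‖ ≤ √(1 + ‖x‖ ^ 2) := (le_sqrt (norm_nonneg _) (by positivity)).2 (by linarith)
  rw [sqrt_le_left (by positivity)]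
  nlinarith [sq_sqrt (show 0 ≤ 1 + ‖x‖ ^ 2 by positivity), norm_sub_le x z, norm_nonneg z,
    norm_nonneg (x - z)]

lemma sqrt_one_add_sq_norm_sub_rpow_le (b : ℝ) (x z : E) :
    √(1 + ‖x - z‖ ^ 2) ^ (-b) ≤ (‖z‖ + √(1 + ‖x‖ ^ 2)) ^ max 0 (-b) :=
  rpow_neg_le_rpow_max_zero_neg b (one_le_sqrt.2 (le_add_of_nonneg_right (by positivity)))
    (sqrt_one_add_sq_norm_sub_le x z)

lemma abs_sqrt_one_add_sq_norm_sub_rpow_sub_le (b : ℝ) (x z : E) :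
    |√(1 + ‖x - z‖ ^ 2) ^ (-b) - √(1 + ‖x‖ ^ 2) ^ (-b)|
      ≤ 2 * (‖z‖ + √(1 + ‖x‖ ^ 2)) ^ max 0 (-b) := by
  have hx : √(1 + ‖x‖ ^ 2) ^ (-b) ≤ (‖z‖ + √(1 + ‖x‖ ^ 2)) ^ max 0 (-b) :=
    rpow_neg_le_rpow_max_zero_neg b (one_le_sqrt.2 (le_add_of_nonneg_right (by positivity)))
      (by simp)
  rw [abs_le]
  constructor <;> nlinarith [sqrt_one_add_sq_norm_sub_rpow_le b x z,
    rpow_nonneg (sqrt_nonneg (1 + ‖x - z‖ ^ 2)) (-b),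
    rpow_nonneg (sqrt_nonneg (1 + ‖x‖ ^ 2)) (-b)]

lemma exists_abs_sqrt_one_add_sq_norm_sub_rpow_sub_le_of_norm_le_half (b : ℝ) :
    ∃ K, 0 ≤ K ∧ ∀ x z : E, ‖z‖ ≤ ‖x‖ / 2 →
      |√(1 + ‖x - z‖ ^ 2) ^ (-b) - √(1 + ‖x‖ ^ 2) ^ (-b)|
        ≤ K * ‖x‖ * ‖z‖ * √(1 + ‖x‖ ^ 2) ^ (-b - 2) := by
  set p := -b / 2
  set M := max ((1 / 4 : ℝ) ^ (p - 1)) ((9 / 4 : ℝ) ^ (p - 1))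
  refine ⟨|p| * M * (5 / 2), by positivity, fun x z hz => ?_⟩
  set t := 1 + ‖x‖ ^ 2
  set s := 1 + ‖x - z‖ ^ 2
  have hxz₀ : ‖x‖ - ‖z‖ ≤ ‖x - z‖ := norm_sub_norm_le x z
  have hxz₁ : ‖x‖ / 2 ≤ ‖x - z‖ := by linarith
  have hxz₂ : ‖x - z‖ ≤ ‖x‖ + ‖z‖ := norm_sub_le x z
  have hs : s ∈ Icc (1 / 4 * t) (9 / 4 * t) := ⟨by nlinarith, by nlinarith [norm_nonneg z]⟩
  have hst : |s - t| ≤ 5 / 2 * (‖x‖ * ‖z‖) := by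
    rw [abs_le]
    constructor
    · nlinarith [mul_self_le_mul_self (by linarith : 0 ≤ ‖x‖ - ‖z‖) hxz₀, norm_nonneg z]
    · nlinarith [mul_self_le_mul_self (norm_nonneg _) hxz₂, norm_nonneg z]
  rw [← rpow_div_two_eq_sqrt _ (by positivity), ← rpow_div_two_eq_sqrt _ (by positivity),
    ← rpow_div_two_eq_sqrt _ (by positivity), show (-b - 2) / 2 = p - 1 by ring]
  calc |s ^ p - t ^ p| ≤ |p| * M * t ^ (p - 1) * |s - t| :=
        abs_rpow_sub_rpow_le_of_mem_Icc p (by norm_num) (by positivity) (by norm_num)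
          (by norm_num) hs
    _ ≤ |p| * M * t ^ (p - 1) * (5 / 2 * (‖x‖ * ‖z‖)) := by gcongr
    _ = |p| * M * (5 / 2) * ‖x‖ * ‖z‖ * t ^ (p - 1) := by ring

end JapaneseBracket

section Gaussian

variable {V : Type*} [NormedAddCommGroup V] [InnerProductSpace ℝ V] [FiniteDimensional ℝ V]
  [MeasurableSpace V] [BorelSpace V]

lemma integrable_exp_neg_mul_sq_norm {a : ℝ} (ha : 0 < a) :
    Integrable (fun v : V => exp (-a * ‖v‖ ^ 2)) := by
  simpa [Complex.norm_exp, ← Complex.ofReal_pow] using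
    (GaussianFourier.integrable_cexp_neg_mul_sq_norm_add (V := V) (b := a)
      (by simpa using ha) 0 0).norm

lemma integrable_exp_neg_mul_sq_norm_mul_add_rpow {a c p : ℝ} (ha : 0 < a) (hc : 0 ≤ c)
    (hp : 0 ≤ p) : Integrable (fun v : V => exp (-a * ‖v‖ ^ 2) * (‖v‖ + c) ^ p) := by
  refine ((integrable_exp_neg_mul_sq_norm (V := V) (half_pos ha)).const_mul
    ((1 + c) ^ p * exp (p ^ 2 / (2 * a)))).mono' (by fun_prop) (ae_of_all _ fun v => ?_)
  rw [norm_of_nonneg (by positivity)]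
  calc exp (-a * ‖v‖ ^ 2) * (‖v‖ + c) ^ p
      ≤ exp (-a * ‖v‖ ^ 2)
          * ((1 + c) ^ p * exp (p ^ 2 / (2 * a)) * exp (a / 2 * ‖v‖ ^ 2)) := by
        gcongr; exact add_rpow_le_mul_exp_mul_sq ha hc hp (norm_nonneg v)
    _ = (1 + c) ^ p * exp (p ^ 2 / (2 * a)) * exp (-(a / 2) * ‖v‖ ^ 2) := by
        rw [mul_left_comm, ← exp_add]; ring_nf

lemma integrable_exp_neg_mul_sq_norm_mul_norm {a : ℝ} (ha : 0 < a) :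
    Integrable (fun v : V => exp (-a * ‖v‖ ^ 2) * ‖v‖) := by
  simpa using integrable_exp_neg_mul_sq_norm_mul_add_rpow (V := V) ha le_rfl zero_le_one

lemma integrable_exp_neg_mul_sq_norm_mul_sqrt_one_add_sq_norm_sub_rpow {a : ℝ} (ha : 0 < a)
    (b : ℝ) (x : V) :
    Integrable (fun z : V => exp (-a * ‖z‖ ^ 2) * √(1 + ‖x - z‖ ^ 2) ^ (-b)) := by
  refine (integrable_exp_neg_mul_sq_norm_mul_add_rpow ha (sqrt_nonneg (1 + ‖x‖ ^ 2))
    (le_max_left 0 (-b))).mono' (by fun_prop) (ae_of_all _ fun z => ?_)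
  rw [norm_of_nonneg (by positivity)]
  gcongr
  exact sqrt_one_add_sq_norm_sub_rpow_le b x z

lemma setIntegral_closedBall_exp_neg_mul_sq_norm_mul_norm_le {a r : ℝ} (ha : 0 ≤ a)
    (hr : 0 ≤ r) :
    ∫ z in closedBall (0 : V) r, exp (-a * ‖z‖ ^ 2) * ‖z‖
      ≤ r ^ (finrank ℝ V + 1) * volume.real (ball (0 : V) 1) := by
  calc ∫ z in closedBall (0 : V) r, exp (-a * ‖z‖ ^ 2) * ‖z‖
      ≤ ∫ _ in closedBall (0 : V) r, r := by
        refine setIntegral_mono_on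
          (ContinuousOn.integrableOn_compact (isCompact_closedBall _ _) (by fun_prop))
          (integrableOn_const (measure_closedBall_lt_top).ne) measurableSet_closedBall
          fun z hz => ?_
        have hexp : exp (-a * ‖z‖ ^ 2) ≤ 1 := exp_le_one_iff.2 (by nlinarith [sq_nonneg ‖z‖])
        nlinarith [mem_closedBall_zero_iff.1 hz, norm_nonneg z]
    _ = r ^ (finrank ℝ V + 1) * volume.real (ball (0 : V) 1) := by
        rw [setIntegral_const, smul_eq_mul, Measure.addHaar_real_closedBall _ _ hr]; ring

lemma setIntegral_closedBall_half_norm_exp_neg_mul_sq_norm_mul_norm_le {a : ℝ} (ha : 0 < a)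
    (x : V) :
    ∫ z in closedBall (0 : V) (‖x‖ / 2), exp (-a * ‖z‖ ^ 2) * ‖z‖
      ≤ (volume.real (ball (0 : V) 1) + ∫ z : V, exp (-a * ‖z‖ ^ 2) * ‖z‖)
        * (if ‖x‖ ≤ 1 then ‖x‖ ^ (finrank ℝ V + 1) else 1) := by
  have hV : 0 ≤ volume.real (ball (0 : V) 1) := measureReal_nonneg
  have hI : 0 ≤ ∫ z : V, exp (-a * ‖z‖ ^ 2) * ‖z‖ := integral_nonneg fun z => by positivity
  split_ifs with hx
  · calc _ ≤ (‖x‖ / 2) ^ (finrank ℝ V + 1) * volume.real (ball (0 : V) 1) :=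
          setIntegral_closedBall_exp_neg_mul_sq_norm_mul_norm_le ha.le (by positivity)
      _ ≤ ‖x‖ ^ (finrank ℝ V + 1) * volume.real (ball (0 : V) 1) := by
          gcongr; linarith [norm_nonneg x]
      _ ≤ _ := by nlinarith [pow_nonneg (norm_nonneg x) (finrank ℝ V + 1)]
  · rw [mul_one]
    linarith [setIntegral_le_integral (s := closedBall (0 : V) (‖x‖ / 2))
      (integrable_exp_neg_mul_sq_norm_mul_norm (V := V) ha)
      (ae_of_all _ fun z => by positivity)]

lemma exists_abs_integral_exp_neg_mul_sq_norm_mul_sub_le {a : ℝ} (ha : 0 < a) (b : ℝ) :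
    ∃ K, 0 ≤ K ∧ ∀ x : V,
      |∫ z, exp (-a * ‖z‖ ^ 2) * (√(1 + ‖x - z‖ ^ 2) ^ (-b) - √(1 + ‖x‖ ^ 2) ^ (-b))|
        ≤ K * ‖x‖ * √(1 + ‖x‖ ^ 2) ^ (-b - 2)
            * (∫ z in closedBall (0 : V) (‖x‖ / 2), exp (-a * ‖z‖ ^ 2) * ‖z‖)
          + 2 * ∫ z in {z : V | ‖x‖ / 2 < ‖z‖},
              exp (-a * ‖z‖ ^ 2) * (‖z‖ + √(1 + ‖x‖ ^ 2)) ^ max 0 (-b) := by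
  obtain ⟨K, hK, hnear⟩ := exists_abs_sqrt_one_add_sq_norm_sub_rpow_sub_le_of_norm_le_half
    (E := V) b
  refine ⟨K, hK, fun x => ?_⟩
  have hcompl : (closedBall (0 : V) (‖x‖ / 2))ᶜ = {z | ‖x‖ / 2 < ‖z‖} := by ext; simp
  rw [← integral_const_mul, ← integral_const_mul, ← hcompl]
  have hint : Integrable fun z : V =>
      exp (-a * ‖z‖ ^ 2) * (√(1 + ‖x - z‖ ^ 2) ^ (-b) - √(1 + ‖x‖ ^ 2) ^ (-b)) := by
    simpa only [mul_sub, Pi.sub_def] using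
      (integrable_exp_neg_mul_sq_norm_mul_sqrt_one_add_sq_norm_sub_rpow ha b x).sub
        ((integrable_exp_neg_mul_sq_norm ha).mul_const _)
  refine abs_integral_le_setIntegral_add_setIntegral_compl measurableSet_closedBall hint
    ((integrable_exp_neg_mul_sq_norm_mul_norm ha).const_mul _).integrableOn
    ((integrable_exp_neg_mul_sq_norm_mul_add_rpow ha (sqrt_nonneg _)
      (le_max_left 0 (-b))).const_mul 2).integrableOn
    (fun z hz => ?_) (fun z _ => ?_) <;> rw [abs_mul, abs_of_pos (exp_pos _)]
  · nlinarith [hnear x z (mem_closedBall_zero_iff.1 hz), exp_pos (-a * ‖z‖ ^ 2)]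
  · nlinarith [abs_sqrt_one_add_sq_norm_sub_rpow_sub_le b x z, exp_pos (-a * ‖z‖ ^ 2)]

end Gaussian

theorem gaussian_convolution_expansion_general (n : ℕ) (A b : ℝ) (hA : 0 < A) :
    ∃ C > 0, ∀ x : EuclideanSpace ℝ (Fin n),
      |(∫ y : EuclideanSpace ℝ (Fin n),
            Real.exp (-A * ‖x - y‖ ^ 2) * Real.sqrt (1 + ‖y‖ ^ 2) ^ (-b))
        - Real.sqrt (1 + ‖x‖ ^ 2) ^ (-b)
          * ∫ z : EuclideanSpace ℝ (Fin n), Real.exp (-A * ‖z‖ ^ 2)|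
      ≤ C * (‖x‖ * Real.sqrt (1 + ‖x‖ ^ 2) ^ (-b - 2)
            * (if ‖x‖ ≤ 1 then ‖x‖ ^ (n + 1) else 1)
          + ∫ z in {z : EuclideanSpace ℝ (Fin n) | ‖x‖ / 2 < ‖z‖},
              Real.exp (-A * ‖z‖ ^ 2)
                * (‖z‖ + Real.sqrt (1 + ‖x‖ ^ 2)) ^ (max 0 (-b))) := by
  obtain ⟨K, hK, hsplit⟩ :=
    exists_abs_integral_exp_neg_mul_sq_norm_mul_sub_le (V := EuclideanSpace ℝ (Fin n)) hA b
  set vol := volume.real (ball (0 : EuclideanSpace ℝ (Fin n)) 1)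
  set I := ∫ z : EuclideanSpace ℝ (Fin n), exp (-A * ‖z‖ ^ 2) * ‖z‖
  have hVI : 0 ≤ vol + I := add_nonneg measureReal_nonneg (integral_nonneg fun z => by positivity)
  refine ⟨K * (vol + I) + 2, by positivity, fun x => ?_⟩
  have hball := setIntegral_closedBall_half_norm_exp_neg_mul_sq_norm_mul_norm_le hA x
  rw [finrank_euclideanSpace_fin] at hball
  set T₁ := ‖x‖ * √(1 + ‖x‖ ^ 2) ^ (-b - 2) * (if ‖x‖ ≤ 1 then ‖x‖ ^ (n + 1) else 1)
  set T₂ := ∫ z in {z : EuclideanSpace ℝ (Fin n) | ‖x‖ / 2 < ‖z‖},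
    exp (-A * ‖z‖ ^ 2) * (‖z‖ + √(1 + ‖x‖ ^ 2)) ^ max 0 (-b)
  have hT₁ : 0 ≤ T₁ := by positivity
  have hT₂ : 0 ≤ T₂ :=
    setIntegral_nonneg (measurableSet_lt measurable_const measurable_norm) fun z _ => by positivity
  rw [integral_mul_sub_mul_integral_eq x (integrable_exp_neg_mul_sq_norm hA)
    (integrable_exp_neg_mul_sq_norm_mul_sqrt_one_add_sq_norm_sub_rpow hA b x)]
  calc _ ≤ K * ‖x‖ * √(1 + ‖x‖ ^ 2) ^ (-b - 2)
            * (∫ z in closedBall 0 (‖x‖ / 2), exp (-A * ‖z‖ ^ 2) * ‖z‖) + 2 * T₂ := hsplit x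
    _ ≤ K * ‖x‖ * √(1 + ‖x‖ ^ 2) ^ (-b - 2)
            * ((vol + I) * (if ‖x‖ ≤ 1 then ‖x‖ ^ (n + 1) else 1)) + 2 * T₂ := by gcongr
    _ ≤ (K * (vol + I) + 2) * (T₁ + T₂) := by nlinarith [mul_nonneg (mul_nonneg hK hVI) hT₂]

theorem gaussian_convolution_expansion (n : ℕ) (hn : 0 < n) (A b : ℝ) (hA : 0 < A) :
    ∃ C > 0, ∀ x : EuclideanSpace ℝ (Fin n),
      |(∫ y : EuclideanSpace ℝ (Fin n),
            Real.exp (-A * ‖x - y‖ ^ 2) * Real.sqrt (1 + ‖y‖ ^ 2) ^ (-b))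
        - Real.sqrt (1 + ‖x‖ ^ 2) ^ (-b)
          * ∫ z : EuclideanSpace ℝ (Fin n), Real.exp (-A * ‖z‖ ^ 2)|
      ≤ C * (‖x‖ * Real.sqrt (1 + ‖x‖ ^ 2) ^ (-b - 2)
            * (if ‖x‖ ≤ 1 then ‖x‖ ^ (n + 1) else 1)
          + ∫ z in {z : EuclideanSpace ℝ (Fin n) | ‖x‖ / 2 < ‖z‖},
              Real.exp (-A * ‖z‖ ^ 2)
                * (‖z‖ + Real.sqrt (1 + ‖x‖ ^ 2)) ^ (max 0 (-b))) :=
  gaussian_convolution_expansion_general n A b hA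
end

section
/- Let n > 0, A > 0, and b ∈ ℝ. Then lim_{|x|→∞} ⟨x⟩^b ∫_{ℝⁿ} e^(-A|x−y|²) ⟨y⟩^(-b) dy = ∫_{ℝⁿ} e^(-A|z|²) dz. -/
/-!
Substituting `y = x - z` turns the expression into `∫ e^{-A|z|²} ⟨x⟩^b ⟨x - z⟩^{-b} dz`.
For fixed `z` the weight `⟨x⟩^b ⟨x - z⟩^{-b}` tends to `1` as `|x| → ∞`, because `⟨·⟩` is
`1`-Lipschitz and tends to infinity; by Peetre's inequality `⟨x⟩ ≤ 2 ⟨x - z⟩ ⟨z⟩` it is bounded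
by `2^{|b|} ⟨z⟩^{|b|}`, which the Gaussian factor makes integrable. Dominated convergence concludes.
-/

open MeasureTheory Real Filter Topology Asymptotics

theorem sqrt_one_add_sq_sub_le (a c : ℝ) : √(1 + a ^ 2) - √(1 + c ^ 2) ≤ |a - c| := by
  have hc : |c| ≤ √(1 + c ^ 2) := Real.abs_le_sqrt (by linarith [sq_nonneg c])
  have hca : c * (a - c) ≤ |c| * |a - c| := abs_mul c (a - c) ▸ le_abs_self _
  rw [sub_le_iff_le_add, Real.sqrt_le_iff]
  refine ⟨by positivity, ?_⟩
  nlinarith [Real.sq_sqrt (show 0 ≤ 1 + c ^ 2 by positivity), sq_abs (a - c),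
    mul_le_mul_of_nonneg_right hc (abs_nonneg (a - c))]

theorem rpow_mul_rpow_neg {p q : ℝ} (hp : 0 ≤ p) (hq : 0 ≤ q) (b : ℝ) :
    p ^ b * q ^ (-b) = (p / q) ^ b := by
  rw [Real.rpow_neg hq, Real.div_rpow hp hq, div_eq_mul_inv]

theorem rpow_mul_rpow_neg_le_rpow_abs {p q w : ℝ} (hp : 0 < p) (hq : 0 < q)
    (hpq : p ≤ w * q) (hqp : q ≤ w * p) (b : ℝ) : p ^ b * q ^ (-b) ≤ w ^ |b| := by
  rcases le_or_gt 0 b with hb | hb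
  · rw [abs_of_nonneg hb, rpow_mul_rpow_neg hp.le hq.le]
    exact Real.rpow_le_rpow (by positivity) ((div_le_iff₀ hq).2 hpq) hb
  · rw [abs_of_neg hb, mul_comm, ← neg_neg b, neg_neg (-b), rpow_mul_rpow_neg hq.le hp.le]
    exact Real.rpow_le_rpow (by positivity) ((div_le_iff₀ hp).2 hqp) (by linarith)

section Bracket

variable {E : Type*} [NormedAddCommGroup E]

theorem abs_sqrt_one_add_norm_sq_sub_le (x y : E) :
    |√(1 + ‖x‖ ^ 2) - √(1 + ‖y‖ ^ 2)| ≤ ‖x - y‖ :=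
  calc |√(1 + ‖x‖ ^ 2) - √(1 + ‖y‖ ^ 2)| ≤ |‖x‖ - ‖y‖| := abs_sub_le_iff.2
        ⟨sqrt_one_add_sq_sub_le _ _,
          by simpa only [abs_sub_comm] using sqrt_one_add_sq_sub_le ‖y‖ ‖x‖⟩
    _ ≤ ‖x - y‖ := abs_norm_sub_norm_le x y

theorem sqrt_one_add_norm_add_sq_le (x y : E) :
    √(1 + ‖x + y‖ ^ 2) ≤ 2 * √(1 + ‖x‖ ^ 2) * √(1 + ‖y‖ ^ 2) :=
  calc √(1 + ‖x + y‖ ^ 2) ≤ 1 + ‖x + y‖ := sqrt_one_add_norm_sq_le _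
    _ ≤ (1 + ‖x‖) * (1 + ‖y‖) := by nlinarith [norm_add_le x y, norm_nonneg x, norm_nonneg y]
    _ ≤ (√2 * √(1 + ‖x‖ ^ 2)) * (√2 * √(1 + ‖y‖ ^ 2)) :=
        mul_le_mul (one_add_norm_le_sqrt_two_mul_sqrt x) (one_add_norm_le_sqrt_two_mul_sqrt y)
          (by positivity) (by positivity)
    _ = 2 * √(1 + ‖x‖ ^ 2) * √(1 + ‖y‖ ^ 2) := by
        rw [mul_mul_mul_comm, Real.mul_self_sqrt zero_le_two, mul_assoc]

theorem sqrt_one_add_norm_sq_rpow_mul_le (b : ℝ) (x z : E) :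
    √(1 + ‖x‖ ^ 2) ^ b * √(1 + ‖x - z‖ ^ 2) ^ (-b) ≤ 2 ^ |b| * √(1 + ‖z‖ ^ 2) ^ |b| := by
  rw [← Real.mul_rpow zero_le_two (Real.sqrt_nonneg _)]
  refine rpow_mul_rpow_neg_le_rpow_abs (by positivity) (by positivity) ?_ ?_ b
  · simpa [mul_right_comm] using sqrt_one_add_norm_add_sq_le (x - z) z
  · simpa [mul_right_comm, sub_eq_add_neg] using sqrt_one_add_norm_add_sq_le x (-z)

theorem tendsto_sqrt_one_add_norm_sq_atTop :
    Tendsto (fun x : E => √(1 + ‖x‖ ^ 2)) (comap norm atTop) atTop :=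
  tendsto_atTop_mono (fun _ => Real.le_sqrt_of_sq_le (by linarith)) tendsto_comap

theorem tendsto_sqrt_one_add_norm_sub_sq_div (z : E) :
    Tendsto (fun x => √(1 + ‖x - z‖ ^ 2) / √(1 + ‖x‖ ^ 2)) (comap norm atTop) (𝓝 1) := by
  have hdiff : Tendsto (fun x => (√(1 + ‖x - z‖ ^ 2) - √(1 + ‖x‖ ^ 2)) / √(1 + ‖x‖ ^ 2))
      (comap norm atTop) (𝓝 0) := by
    refine squeeze_zero_norm (fun x => ?_)
      ((tendsto_const_nhds (x := ‖z‖)).div_atTop tendsto_sqrt_one_add_norm_sq_atTop)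
    rw [norm_div, Real.norm_of_nonneg (Real.sqrt_nonneg _), Real.norm_eq_abs]
    gcongr
    simpa using abs_sqrt_one_add_norm_sq_sub_le (x - z) x
  simpa using (hdiff.const_add 1).congr fun x => by
    rw [sub_div, div_self (by positivity)]; ring

theorem tendsto_sqrt_one_add_norm_sq_rpow_mul (b : ℝ) (z : E) :
    Tendsto (fun x => √(1 + ‖x‖ ^ 2) ^ b * √(1 + ‖x - z‖ ^ 2) ^ (-b))
      (comap norm atTop) (𝓝 1) := by
  have h := ((Real.continuousAt_rpow_const 1 (-b) (Or.inl one_ne_zero)).tendsto).comp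
    (tendsto_sqrt_one_add_norm_sub_sq_div z)
  rw [Real.one_rpow] at h
  refine h.congr fun x => ?_
  rw [Function.comp_apply, mul_comm,
    ← rpow_mul_rpow_neg (Real.sqrt_nonneg _) (Real.sqrt_nonneg _), neg_neg]

theorem continuous_sqrt_one_add_norm_sq_rpow (b : ℝ) :
    Continuous (fun x : E => √(1 + ‖x‖ ^ 2) ^ b) :=
  (by fun_prop : Continuous (fun x : E => √(1 + ‖x‖ ^ 2))).rpow_const
    fun x => Or.inl (by positivity)

end Bracket

theorem integrable_exp_neg_mul_sq_norm_mul_sqrt_one_add_norm_sq_rpow {V : Type*}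
    [NormedAddCommGroup V] [InnerProductSpace ℝ V] [FiniteDimensional ℝ V]
    [MeasurableSpace V] [BorelSpace V] {A : ℝ} (hA : 0 < A) (s : ℝ) :
    Integrable fun z : V => rexp (-A * ‖z‖ ^ 2) * √(1 + ‖z‖ ^ 2) ^ s := by
  have hgauss : Integrable fun z : V => rexp (-(A / 2) * ‖z‖ ^ 2) := by
    simpa [Complex.norm_exp, ← Complex.ofReal_pow] using
      (GaussianFourier.integrable_cexp_neg_mul_sq_norm_add (V := V) (b := ((A / 2 : ℝ) : ℂ))
        (by simpa using hA) 0 0).norm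
  have hbracket : (fun z : V => √(1 + ‖z‖ ^ 2) ^ s) =o[comap norm atTop]
      fun z => rexp (A / 2 * (1 + ‖z‖ ^ 2)) := by
    have hu : Tendsto (fun z : V => 1 + ‖z‖ ^ 2) (comap norm atTop) atTop :=
      tendsto_atTop_add_const_left _ _ ((tendsto_pow_atTop two_ne_zero).comp tendsto_comap)
    refine ((isLittleO_rpow_exp_pos_mul_atTop (s / 2) (half_pos hA)).comp_tendsto hu).congr_left
      fun z => ?_
    rw [Function.comp_apply, Real.sqrt_eq_rpow, ← Real.rpow_mul (by positivity)]
    ring_nf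
  refine (continuous_exp.comp (by fun_prop) |>.mul
    (continuous_sqrt_one_add_norm_sq_rpow s)).locallyIntegrable.integrable_of_isBigO_cocompact ?_
    ((hgauss.const_mul (rexp (A / 2))).integrableAtFilter _)
  rw [← Metric.cobounded_eq_cocompact, ← comap_norm_atTop]
  refine ((isBigO_refl (fun z : V => rexp (-A * ‖z‖ ^ 2)) _).mul hbracket.isBigO).congr_right
    fun z => ?_
  rw [← Real.exp_add, ← Real.exp_add]
  ring_nf

theorem tendsto_sqrt_one_add_norm_sq_rpow_mul_integral_comp_sub {E : Type*}
    [NormedAddCommGroup E] [MeasurableSpace E] [BorelSpace E] {μ : Measure E}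
    [μ.IsAddLeftInvariant] [μ.IsNegInvariant] {g : E → ℝ} (b : ℝ)
    (hg : AEStronglyMeasurable g μ) (hgw : Integrable (fun z => g z * √(1 + ‖z‖ ^ 2) ^ |b|) μ) :
    Tendsto (fun x => √(1 + ‖x‖ ^ 2) ^ b * ∫ y, g (x - y) * √(1 + ‖y‖ ^ 2) ^ (-b) ∂μ)
      (comap norm atTop) (𝓝 (∫ z, g z ∂μ)) := by
  have hshift (x : E) : √(1 + ‖x‖ ^ 2) ^ b * ∫ y, g (x - y) * √(1 + ‖y‖ ^ 2) ^ (-b) ∂μ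
      = ∫ z, g z * (√(1 + ‖x‖ ^ 2) ^ b * √(1 + ‖x - z‖ ^ 2) ^ (-b)) ∂μ := by
    have hsub : ∫ y, g (x - y) * √(1 + ‖y‖ ^ 2) ^ (-b) ∂μ
        = ∫ z, g z * √(1 + ‖x - z‖ ^ 2) ^ (-b) ∂μ := by
      simpa only [sub_sub_cancel] using
        integral_sub_left_eq_self (fun z => g z * √(1 + ‖x - z‖ ^ 2) ^ (-b)) μ x
    rw [hsub, ← integral_const_mul]
    congr 1 with z
    ring
  simp only [hshift]
  refine tendsto_integral_filter_of_dominated_convergence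
    (fun z => 2 ^ |b| * ‖g z * √(1 + ‖z‖ ^ 2) ^ |b|‖) (Eventually.of_forall fun x => hg.mul ?_)
    (Eventually.of_forall fun x => Eventually.of_forall fun z => ?_) (hgw.norm.const_mul _)
    (Eventually.of_forall fun z => ?_)
  · exact (continuous_const.mul ((continuous_sqrt_one_add_norm_sq_rpow (-b)).comp
      (continuous_sub_left x))).aestronglyMeasurable
  · rw [norm_mul, norm_mul (g z),
      Real.norm_of_nonneg
        (mul_nonneg (by positivity) (by positivity) : 0 ≤ √(1 + ‖x‖ ^ 2) ^ b * _),
      Real.norm_of_nonneg (by positivity : 0 ≤ √(1 + ‖z‖ ^ 2) ^ |b|)]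
    exact (mul_le_mul_of_nonneg_left (sqrt_one_add_norm_sq_rpow_mul_le b x z)
      (norm_nonneg (g z))).trans_eq (by ring)
  · simpa using (tendsto_sqrt_one_add_norm_sq_rpow_mul b z).const_mul (g z)

theorem gaussian_convolution_limit_general (n : ℕ) (A b : ℝ) (hA : 0 < A) :
    Tendsto
      (fun x : EuclideanSpace ℝ (Fin n) =>
        Real.sqrt (1 + ‖x‖ ^ 2) ^ b
          * ∫ y : EuclideanSpace ℝ (Fin n),
              Real.exp (-A * ‖x - y‖ ^ 2) * Real.sqrt (1 + ‖y‖ ^ 2) ^ (-b))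
      (comap norm atTop)
      (nhds (∫ z : EuclideanSpace ℝ (Fin n), Real.exp (-A * ‖z‖ ^ 2))) :=
  tendsto_sqrt_one_add_norm_sq_rpow_mul_integral_comp_sub b
    (by fun_prop : Continuous fun z : EuclideanSpace ℝ (Fin n) =>
      rexp (-A * ‖z‖ ^ 2)).aestronglyMeasurable
    (integrable_exp_neg_mul_sq_norm_mul_sqrt_one_add_norm_sq_rpow hA |b|)

theorem gaussian_convolution_limit (n : ℕ) (hn : 0 < n) (A b : ℝ) (hA : 0 < A) :
    Tendsto
      (fun x : EuclideanSpace ℝ (Fin n) =>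
        Real.sqrt (1 + ‖x‖ ^ 2) ^ b
          * ∫ y : EuclideanSpace ℝ (Fin n),
              Real.exp (-A * ‖x - y‖ ^ 2) * Real.sqrt (1 + ‖y‖ ^ 2) ^ (-b))
      (comap norm atTop)
      (nhds (∫ z : EuclideanSpace ℝ (Fin n), Real.exp (-A * ‖z‖ ^ 2))) :=
  gaussian_convolution_limit_general n A b hA
end

section
/- Let n > 0, A > 0, b ∈ ℝ. There exists C > 0 such that for all x ∈ ℝⁿ, | ∫_{|z| ≤ |x|/2} e^(-A|z|²) [ (1+|x−z|²)^(-b/2) − (1+|x|²)^(-b/2) ] dz | ≤ C |x| ⟨x⟩^(-b-2) ( |x|^{n+1} 1_{|x|≤1} + 1_{|x|>1} ). -/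
/-!
For `‖z‖ ≤ ‖x‖ / 2` both `‖x - z‖²` and `‖x‖²` lie in `[‖x‖² / 4, 9‖x‖² / 4]`, on which the
derivative of `u ↦ (1 + u) ^ (-b/2)` is comparable to `(1 + ‖x‖²) ^ (-b/2 - 1) = ⟨x⟩ ^ (-b-2)`.
Since moreover `|‖x - z‖² - ‖x‖²| ≤ 3‖x‖‖z‖`, the mean value theorem bounds the integrand by a
constant times `⟨x⟩ ^ (-b-2) ‖x‖ e^(-A‖z‖²) ‖z‖`. What is left is `∫_{‖z‖ ≤ ‖x‖/2} e^(-A‖z‖²) ‖z‖`,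
which is at most `(‖x‖/2) ^ (n+1)` times the volume of the unit ball (the integrand is at most
`‖x‖/2` there), and at most the full Gaussian moment `∫ e^(-A‖z‖²) ‖z‖`.
-/

open MeasureTheory Real Metric Module Filter

lemma rpow_le_four_rpow_abs {t : ℝ} (h₁ : 1 / 4 ≤ t) (h₂ : t ≤ 4) (e : ℝ) : t ^ e ≤ 4 ^ |e| := by
  rcases le_or_gt 0 e with he | he
  · rw [abs_of_nonneg he]
    exact rpow_le_rpow (by linarith) h₂ he
  · calc t ^ e ≤ (1 / 4 : ℝ) ^ e := rpow_le_rpow_of_nonpos (by norm_num) h₁ he.le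
      _ = 4 ^ |e| := by
        rw [abs_of_neg he, one_div, inv_rpow (by norm_num), ← rpow_neg (by norm_num)]

lemma one_add_rpow_le_of_mem_Icc {a u : ℝ} (ha : 0 ≤ a) (hu : u ∈ Set.Icc (a / 4) (9 * a / 4))
    (e : ℝ) : (1 + u) ^ e ≤ 4 ^ |e| * (1 + a) ^ e := by
  have ha₁ : 0 < 1 + a := by linarith
  rw [← div_mul_cancel₀ (1 + u) ha₁.ne', mul_rpow (div_nonneg (by linarith [hu.1]) ha₁.le) ha₁.le]
  gcongr
  apply rpow_le_four_rpow_abs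
  · rw [le_div_iff₀ ha₁]; linarith [hu.1]
  · rw [div_le_iff₀ ha₁]; linarith [hu.2]

lemma abs_one_add_rpow_sub_le {a s t : ℝ} (ha : 0 ≤ a) (hs : s ∈ Set.Icc (a / 4) (9 * a / 4))
    (ht : t ∈ Set.Icc (a / 4) (9 * a / 4)) (c : ℝ) :
    |(1 + s) ^ c - (1 + t) ^ c| ≤ |c| * 4 ^ |c - 1| * (1 + a) ^ (c - 1) * |s - t| := by
  have hderiv : ∀ u ∈ Set.Icc (a / 4) (9 * a / 4), HasDerivWithinAt (fun u : ℝ ↦ (1 + u) ^ c)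
      (c * (1 + u) ^ (c - 1)) (Set.Icc (a / 4) (9 * a / 4)) u := by
    intro u hu
    have hpos : 0 < 1 + u := by linarith [hu.1]
    simpa using (((hasDerivAt_id u).const_add 1).rpow_const (p := c)
      (Or.inl hpos.ne')).hasDerivWithinAt
  have hbound : ∀ u ∈ Set.Icc (a / 4) (9 * a / 4),
      ‖c * (1 + u) ^ (c - 1)‖ ≤ |c| * 4 ^ |c - 1| * (1 + a) ^ (c - 1) := by
    intro u hu
    rw [norm_mul, norm_eq_abs, norm_of_nonneg (rpow_nonneg (by linarith [hu.1]) _), mul_assoc]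
    gcongr
    exact one_add_rpow_le_of_mem_Icc ha hu _
  simpa only [norm_eq_abs] using
    (convex_Icc _ _).norm_image_sub_le_of_norm_hasDerivWithin_le hderiv hbound ht hs

lemma abs_one_add_norm_sub_sq_rpow_sub_le {E : Type*} [SeminormedAddCommGroup E] {x z : E}
    (hz : ‖z‖ ≤ ‖x‖ / 2) (c : ℝ) :
    |(1 + ‖x - z‖ ^ 2) ^ c - (1 + ‖x‖ ^ 2) ^ c|
      ≤ 3 * |c| * 4 ^ |c - 1| * (1 + ‖x‖ ^ 2) ^ (c - 1) * (‖x‖ * ‖z‖) := by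
  have hupper : ‖x - z‖ ≤ ‖x‖ + ‖z‖ := norm_sub_le x z
  have hlower : ‖x‖ - ‖z‖ ≤ ‖x - z‖ := norm_sub_norm_le x z
  have hz₀ := norm_nonneg z
  have hmem : ∀ ρ, ‖x‖ / 2 ≤ ρ → ρ ≤ 3 * ‖x‖ / 2 →
      ρ ^ 2 ∈ Set.Icc (‖x‖ ^ 2 / 4) (9 * ‖x‖ ^ 2 / 4) := fun ρ h₁ h₂ ↦
    ⟨by nlinarith [norm_nonneg x], by nlinarith [norm_nonneg x]⟩
  have hdiff : |‖x - z‖ ^ 2 - ‖x‖ ^ 2| ≤ 3 * (‖x‖ * ‖z‖) := by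
    rw [abs_le]; constructor <;> nlinarith [norm_nonneg (x - z)]
  calc _ ≤ |c| * 4 ^ |c - 1| * (1 + ‖x‖ ^ 2) ^ (c - 1) * |‖x - z‖ ^ 2 - ‖x‖ ^ 2| :=
        abs_one_add_rpow_sub_le (sq_nonneg _) (hmem _ (by linarith) (by linarith))
          (hmem _ (by linarith) (by linarith)) c
    _ ≤ |c| * 4 ^ |c - 1| * (1 + ‖x‖ ^ 2) ^ (c - 1) * (3 * (‖x‖ * ‖z‖)) := by gcongr
    _ = _ := by ring

lemma integrable_exp_neg_mul_sq_norm_mul_norm_s13 {V : Type*} [NormedAddCommGroup V]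
    [InnerProductSpace ℝ V] [FiniteDimensional ℝ V] [MeasurableSpace V] [BorelSpace V]
    {A : ℝ} (hA : 0 < A) : Integrable fun z : V ↦ exp (-A * ‖z‖ ^ 2) * ‖z‖ := by
  have hgauss : Integrable fun z : V ↦ exp (-(A / 2) * ‖z‖ ^ 2) := by
    refine (GaussianFourier.integrable_cexp_neg_mul_sq_norm_add (b := ((A / 2 : ℝ) : ℂ))
      (by simpa using hA) 0 (0 : V)).norm.congr (Eventually.of_forall fun z ↦ ?_)
    simp only [Complex.norm_exp]
    norm_num [← Complex.ofReal_pow]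
  refine (hgauss.const_mul (1 + 2 / A)).mono' (by fun_prop) (Eventually.of_forall fun z ↦ ?_)
  have hnorm : ‖z‖ ≤ (1 + 2 / A) * exp (A / 2 * ‖z‖ ^ 2) := by
    calc ‖z‖ ≤ 1 + ‖z‖ ^ 2 := by nlinarith [sq_nonneg (‖z‖ - 1)]
      _ ≤ 1 + ‖z‖ ^ 2 + (A / 2 * ‖z‖ ^ 2 + 2 / A) := le_add_of_nonneg_right (by positivity)
      _ = (1 + 2 / A) * (A / 2 * ‖z‖ ^ 2 + 1) := by field_simp; ring
      _ ≤ _ := by gcongr; exact add_one_le_exp _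
  rw [norm_of_nonneg (by positivity)]
  calc exp (-A * ‖z‖ ^ 2) * ‖z‖
      ≤ exp (-A * ‖z‖ ^ 2) * ((1 + 2 / A) * exp (A / 2 * ‖z‖ ^ 2)) := by gcongr
    _ = (1 + 2 / A) * exp (-(A / 2) * ‖z‖ ^ 2) := by rw [mul_left_comm, ← exp_add]; ring_nf

lemma setIntegral_closedBall_exp_neg_mul_sq_norm_mul_norm_le_s13 {E : Type*} [NormedAddCommGroup E]
    [NormedSpace ℝ E] [FiniteDimensional ℝ E] [MeasurableSpace E] [BorelSpace E]
    (μ : Measure E) [μ.IsAddHaarMeasure] {A ρ : ℝ} (hA : 0 ≤ A) (hρ : 0 ≤ ρ) :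
    ∫ z in closedBall 0 ρ, exp (-A * ‖z‖ ^ 2) * ‖z‖ ∂μ
      ≤ ρ ^ (finrank ℝ E + 1) * μ.real (ball 0 1) := by
  have hle : ∀ z ∈ closedBall (0 : E) ρ, ‖exp (-A * ‖z‖ ^ 2) * ‖z‖‖ ≤ ρ := by
    intro z hz
    rw [mem_closedBall_zero_iff] at hz
    rw [norm_of_nonneg (by positivity), ← one_mul ρ]
    exact mul_le_mul (exp_le_one_iff.2 (by nlinarith)) hz (norm_nonneg z) zero_le_one
  calc _ ≤ ‖∫ z in closedBall 0 ρ, exp (-A * ‖z‖ ^ 2) * ‖z‖ ∂μ‖ := le_abs_self _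
    _ ≤ ρ * μ.real (closedBall 0 ρ) :=
        norm_setIntegral_le_of_norm_le_const measure_closedBall_lt_top hle
    _ = _ := by rw [Measure.addHaar_real_closedBall μ 0 hρ]; ring

lemma setIntegral_closedBall_half_exp_neg_mul_sq_norm_mul_norm_le {E : Type*}
    [NormedAddCommGroup E] [NormedSpace ℝ E] [FiniteDimensional ℝ E] [MeasurableSpace E]
    [BorelSpace E] (μ : Measure E) [μ.IsAddHaarMeasure] {A : ℝ} (hA : 0 ≤ A)
    (hint : Integrable (fun z : E ↦ exp (-A * ‖z‖ ^ 2) * ‖z‖) μ) {r : ℝ} (hr : 0 ≤ r) :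
    ∫ z in closedBall 0 (r / 2), exp (-A * ‖z‖ ^ 2) * ‖z‖ ∂μ
      ≤ (μ.real (ball 0 1) + ∫ z, exp (-A * ‖z‖ ^ 2) * ‖z‖ ∂μ)
        * if r ≤ 1 then r ^ (finrank ℝ E + 1) else 1 := by
  have hvol : 0 ≤ μ.real (ball 0 1) := measureReal_nonneg
  have hmoment : 0 ≤ ∫ z, exp (-A * ‖z‖ ^ 2) * ‖z‖ ∂μ := integral_nonneg fun z ↦ by positivity
  split_ifs with hr₁
  · calc _ ≤ (r / 2) ^ (finrank ℝ E + 1) * μ.real (ball 0 1) :=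
          setIntegral_closedBall_exp_neg_mul_sq_norm_mul_norm_le_s13 μ hA (by positivity)
      _ ≤ r ^ (finrank ℝ E + 1) * μ.real (ball 0 1) := by gcongr; linarith
      _ ≤ _ := by rw [mul_comm]; gcongr; linarith
  · have := setIntegral_le_integral (s := closedBall 0 (r / 2)) hint
      (Eventually.of_forall fun z ↦ by positivity)
    linarith

lemma abs_setIntegral_exp_mul_rpow_sub_le {E : Type*} [NormedAddCommGroup E] [MeasurableSpace E]
    [OpensMeasurableSpace E] {μ : Measure E} {A : ℝ}
    (hint : Integrable (fun z : E ↦ exp (-A * ‖z‖ ^ 2) * ‖z‖) μ) (c : ℝ) (x : E) :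
    |∫ z in closedBall 0 (‖x‖ / 2),
        exp (-A * ‖z‖ ^ 2) * ((1 + ‖x - z‖ ^ 2) ^ c - (1 + ‖x‖ ^ 2) ^ c) ∂μ|
      ≤ 3 * |c| * 4 ^ |c - 1| * (1 + ‖x‖ ^ 2) ^ (c - 1) * ‖x‖ *
        ∫ z in closedBall 0 (‖x‖ / 2), exp (-A * ‖z‖ ^ 2) * ‖z‖ ∂μ := by
  rw [← integral_const_mul, ← norm_eq_abs]
  refine norm_integral_le_of_norm_le (hint.restrict.const_mul _) ?_
  refine (ae_restrict_iff' measurableSet_closedBall).2 (Eventually.of_forall fun z hz ↦ ?_)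
  rw [mem_closedBall_zero_iff] at hz
  rw [norm_mul, norm_of_nonneg (exp_pos _).le, norm_eq_abs]
  calc _ ≤ exp (-A * ‖z‖ ^ 2)
        * (3 * |c| * 4 ^ |c - 1| * (1 + ‖x‖ ^ 2) ^ (c - 1) * (‖x‖ * ‖z‖)) := by
        gcongr; exact abs_one_add_norm_sub_sq_rpow_sub_le hz c
    _ = _ := by ring

theorem gaussian_inner_difference_estimate_general (n : ℕ) (A b : ℝ) (hA : 0 < A) :
    ∃ C > 0, ∀ x : EuclideanSpace ℝ (Fin n),
      |∫ z in {z : EuclideanSpace ℝ (Fin n) | ‖z‖ ≤ ‖x‖ / 2},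
          Real.exp (-A * ‖z‖ ^ 2)
            * ((1 + ‖x - z‖ ^ 2) ^ (-b / 2) - (1 + ‖x‖ ^ 2) ^ (-b / 2))|
      ≤ C * ‖x‖ * Real.sqrt (1 + ‖x‖ ^ 2) ^ (-b - 2)
          * (if ‖x‖ ≤ 1 then ‖x‖ ^ (n + 1) else 1) := by
  set M := 3 * |-b / 2| * 4 ^ |-b / 2 - 1|
  set g : EuclideanSpace ℝ (Fin n) → ℝ := fun z ↦ exp (-A * ‖z‖ ^ 2) * ‖z‖
  have hg : Integrable g := integrable_exp_neg_mul_sq_norm_mul_norm_s13 hA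
  set V := volume.real (ball (0 : EuclideanSpace ℝ (Fin n)) 1)
  set K := ∫ z, g z
  have hK : 0 ≤ K := integral_nonneg fun z ↦ by positivity
  refine ⟨M * (V + K) + 1, by positivity, fun x ↦ ?_⟩
  have hball : {z : EuclideanSpace ℝ (Fin n) | ‖z‖ ≤ ‖x‖ / 2} = closedBall 0 (‖x‖ / 2) := by
    ext; simp
  have hbracket : sqrt (1 + ‖x‖ ^ 2) ^ (-b - 2) = (1 + ‖x‖ ^ 2) ^ (-b / 2 - 1) := by
    rw [sqrt_eq_rpow, ← rpow_mul (by positivity)]; ring_nf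
  have hmoment := setIntegral_closedBall_half_exp_neg_mul_sq_norm_mul_norm_le volume hA.le hg
    (norm_nonneg x)
  rw [finrank_euclideanSpace_fin] at hmoment
  rw [hball, hbracket]
  set P := (1 + ‖x‖ ^ 2) ^ (-b / 2 - 1)
  set I := if ‖x‖ ≤ 1 then ‖x‖ ^ (n + 1) else 1
  calc _ ≤ M * P * ‖x‖ * ∫ z in closedBall 0 (‖x‖ / 2), g z :=
        abs_setIntegral_exp_mul_rpow_sub_le hg _ x
    _ ≤ M * P * ‖x‖ * ((V + K) * I) := by gcongr
    _ = M * (V + K) * (‖x‖ * P * I) := by ring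
    _ ≤ (M * (V + K) + 1) * (‖x‖ * P * I) := by gcongr; linarith
    _ = _ := by ring

theorem gaussian_inner_difference_estimate (n : ℕ) (hn : 0 < n) (A b : ℝ) (hA : 0 < A) :
    ∃ C > 0, ∀ x : EuclideanSpace ℝ (Fin n),
      |∫ z in {z : EuclideanSpace ℝ (Fin n) | ‖z‖ ≤ ‖x‖ / 2},
          Real.exp (-A * ‖z‖ ^ 2)
            * ((1 + ‖x - z‖ ^ 2) ^ (-b / 2) - (1 + ‖x‖ ^ 2) ^ (-b / 2))|
      ≤ C * ‖x‖ * Real.sqrt (1 + ‖x‖ ^ 2) ^ (-b - 2)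
          * (if ‖x‖ ≤ 1 then ‖x‖ ^ (n + 1) else 1) :=
  gaussian_inner_difference_estimate_general n A b hA
end
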